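/- arXiv:1205.0190 — 8 statements merged into one kernel-verified Lean document; each statement's English description precedes it below -/
import Mathlib

section
/- Let G=(V,E) be a finite graph on vertices {1,...,r}. Define Δ_G(n_1,...,n_r) = Π_{(k,l)∈E} δ(n_k·n_l), where δ(0)=1 and δ(n)=0 for n ≥ 1, and let T_G(x_1,...,x_r) = Σ_{n ∈ ℕ_0^r} Δ_G(n) x^n for |x_j| < 1. Then (1-x_1)(1-x_2)···(1-x_r)·T_G(x) = Σ_{U⊆E} (-1)^{|U|} Π_{j ∈ ver(U)} x_j. -/
/-!
Write the edge condition as `∏_{(k,l) ∈ E} (1 - [n_k ≥ 1][n_l ≥ 1])` and expand: each `U ⊆ E`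
contributes `(-1)^|U| ∏_{j ∈ ver U} [n_j ≥ 1]`. Summed against `xⁿ`, such a term factors into
one-variable geometric series, `x_j / (1 - x_j)` for `j ∈ ver U` and `1 / (1 - x_j)` otherwise,
so the factor `∏ (1 - x_j)` leaves exactly `∏_{j ∈ ver U} x_j`.
-/

open scoped BigOperators

/-- The vertex set of a subset `U` of edges: all vertices adjacent to some edge of `U`. -/
def verSet {r : ℕ} (U : Finset (Fin r × Fin r)) : Finset (Fin r) :=
  U.biUnion (fun e => {e.1, e.2})

open Finset

section PiProduct

variable {R β : Type*} [NormedCommRing R]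

theorem summable_norm_pi_prod {r : ℕ} {f : Fin r → β → R}
    (hf : ∀ i, Summable fun b => ‖f i b‖) :
    Summable fun n : Fin r → β => ‖∏ i, f i (n i)‖ := by
  induction r with
  | zero => exact .of_finite
  | succ r ih =>
    rw [← (Fin.consEquiv fun _ => β).summable_iff]
    simpa [Function.comp_def, Fin.prod_univ_succ, Fin.consEquiv]
      using (hf 0).mul_norm (ih fun i => hf i.succ)

theorem hasSum_pi_prod [CompleteSpace R] {r : ℕ} {f : Fin r → β → R}
    (hf : ∀ i, Summable fun b => ‖f i b‖) :
    HasSum (fun n : Fin r → β => ∏ i, f i (n i)) (∏ i, ∑' b, f i b) := by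
  induction r with
  | zero => simp
  | succ r ih =>
    rw [← (Fin.consEquiv fun _ => β).hasSum_iff, Fin.prod_univ_succ]
    simpa [Function.comp_def, Fin.prod_univ_succ, Fin.consEquiv]
      using (hf 0).of_norm.hasSum.mul (ih fun i => hf i.succ)
        ((hf 0).mul_norm (summable_norm_pi_prod fun i => hf i.succ)).of_norm

end PiProduct

section Geometric

variable {K : Type*} [NormedDivisionRing K] {ξ : K}

theorem summable_norm_geometric_ite (h : ‖ξ‖ < 1) (p : Prop) [Decidable p] :
    Summable fun m : ℕ => ‖if p ∧ m = 0 then 0 else ξ ^ m‖ :=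
  .of_nonneg_of_le (fun _ => norm_nonneg _)
    (fun m => by split_ifs <;> simp [norm_pow])
    (summable_geometric_of_lt_one (norm_nonneg ξ) h)

theorem hasSum_geometric_ite (h : ‖ξ‖ < 1) (p : Prop) [Decidable p] :
    HasSum (fun m : ℕ => if p ∧ m = 0 then 0 else ξ ^ m) ((if p then ξ else 1) * (1 - ξ)⁻¹) := by
  have hne : 1 - ξ ≠ 0 := sub_ne_zero.2 fun h1 => by simp [← h1] at h
  have hgeom := hasSum_geometric_of_norm_lt_one h
  by_cases hp : p
  · have hval : ξ * (1 - ξ)⁻¹ = (1 - ξ)⁻¹ - 1 :=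
      calc ξ * (1 - ξ)⁻¹ = (1 - (1 - ξ)) * (1 - ξ)⁻¹ := by rw [sub_sub_cancel]
        _ = (1 - ξ)⁻¹ - 1 := by rw [sub_mul, one_mul, mul_inv_cancel₀ hne]
    rw [if_pos hp, hval]
    exact (hgeom.sub (hasSum_ite_eq 0 1)).congr_fun fun m => by
      rcases m with _ | m <;> simp [hp]
  · simpa [hp] using hgeom

end Geometric

theorem prod_ite_mem_and_eq_zero {ι M : Type*} [Fintype ι] [DecidableEq ι] [CommMonoidWithZero M]
    (S : Finset ι) (n : ι → ℕ) (x : ι → M) :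
    ∏ j, (if j ∈ S ∧ n j = 0 then 0 else x j ^ n j)
      = (if ∀ j ∈ S, n j ≠ 0 then 1 else 0) * ∏ j, x j ^ n j := by
  split_ifs with h
  · rw [one_mul]
    exact prod_congr rfl fun j _ => if_neg fun hj => h j hj.1 hj.2
  · push Not at h
    obtain ⟨j, hj, hnj⟩ := h
    rw [zero_mul]
    exact prod_eq_zero (mem_univ j) (if_pos ⟨hj, hnj⟩)

section InclusionExclusion

variable {r : ℕ}

theorem forall_mem_verSet_iff {U : Finset (Fin r × Fin r)} {P : Fin r → Prop} :
    (∀ j ∈ verSet U, P j) ↔ ∀ e ∈ U, P e.1 ∧ P e.2 := by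
  simp only [verSet, mem_biUnion, mem_insert, mem_singleton]
  grind

theorem ite_isIndependent_eq_sum_powerset {R : Type*} [CommRing R] (E : Finset (Fin r × Fin r))
    (P : Fin r → Prop) [DecidablePred P] :
    (if ∀ e ∈ E, ¬(P e.1 ∧ P e.2) then (1 : R) else 0)
      = ∑ U ∈ E.powerset, (-1) ^ #U * if ∀ j ∈ verSet U, P j then 1 else 0 := by
  -- only the `U ⊆ F` contribute, and `∑_{U ⊆ F} (-1)^|U|` vanishes unless `F = ∅`
  set F := E.filter fun e => P e.1 ∧ P e.2
  have hpowerset : E.powerset.filter (fun U => ∀ j ∈ verSet U, P j) = F.powerset := by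
    ext U
    simp only [mem_filter, mem_powerset, forall_mem_verSet_iff, F, subset_iff]
    grind
  simp_rw [mul_ite, mul_one, mul_zero]
  rw [← sum_filter, hpowerset]
  have halternating := congrArg (Int.cast : ℤ → R) (sum_powerset_neg_one_pow_card (x := F))
  push_cast at halternating
  simp [halternating, F, filter_eq_empty_iff]

theorem ite_forall_mul_eq_zero_eq_sum_powerset {R : Type*} [CommRing R]
    (E : Finset (Fin r × Fin r)) (n : Fin r → ℕ) (x : Fin r → R) :
    (if ∀ e ∈ E, n e.1 * n e.2 = 0 then ∏ j, x j ^ n j else 0)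
      = ∑ U ∈ E.powerset, (-1) ^ #U * ∏ j, (if j ∈ verSet U ∧ n j = 0 then 0 else x j ^ n j) := by
  calc (if ∀ e ∈ E, n e.1 * n e.2 = 0 then ∏ j, x j ^ n j else 0)
      = (if ∀ e ∈ E, ¬(n e.1 ≠ 0 ∧ n e.2 ≠ 0) then 1 else 0) * ∏ j, x j ^ n j := by
        simp only [mul_eq_zero, not_and_or, not_not, ite_mul, one_mul, zero_mul]
    _ = _ := by
        rw [ite_isIndependent_eq_sum_powerset E (n · ≠ 0), sum_mul]
        simp only [prod_ite_mem_and_eq_zero, mul_assoc]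
        congr! -- the two sides differ only in their `Decidable` instances

end InclusionExclusion

/-- Lemma (prop4): with `Δ_G(n) = ∏_{(k,l) ∈ E} δ(n_k n_l)` and
`T_G(x) = ∑_{n ∈ ℕ₀^r} Δ_G(n) xⁿ` for `|x_j| < 1`, one has
`(1-x_1)⋯(1-x_r) T_G(x) = ∑_{U ⊆ E} (-1)^{|U|} ∏_{j ∈ ver U} x_j`. -/
theorem graph_power_series_identity
    (r : ℕ) (E : Finset (Fin r × Fin r)) (x : Fin r → ℂ)
    (hx : ∀ j, ‖x j‖ < 1) :
    (∏ j, (1 - x j)) *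
      (∑' n : Fin r → ℕ,
        if ∀ e ∈ E, n e.1 * n e.2 = 0 then ∏ j, x j ^ n j else 0)
    = ∑ U ∈ E.powerset, (-1 : ℂ) ^ U.card * ∏ j ∈ verSet U, x j := by
  have hprod_ne : ∏ j, (1 - x j) ≠ 0 :=
    prod_ne_zero_iff.2 fun j _ => sub_ne_zero.2 fun h => by simpa [← h] using hx j
  have hterm (U : Finset (Fin r × Fin r)) : HasSum
      (fun n : Fin r → ℕ => ∏ j, if j ∈ verSet U ∧ n j = 0 then 0 else x j ^ n j)
      ((∏ j ∈ verSet U, x j) * (∏ j, (1 - x j))⁻¹) := by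
    have := hasSum_pi_prod fun j => summable_norm_geometric_ite (hx j) (j ∈ verSet U)
    rwa [prod_congr rfl fun j _ => (hasSum_geometric_ite (hx j) (j ∈ verSet U)).tsum_eq,
      prod_mul_distrib, prod_ite_mem, univ_inter, prod_inv_distrib] at this
  have hsum := hasSum_sum fun U (_ : U ∈ E.powerset) => (hterm U).mul_left ((-1 : ℂ) ^ #U)
  rw [tsum_congr (ite_forall_mul_eq_zero_eq_sum_powerset E · x), hsum.tsum_eq, mul_sum]
  refine sum_congr rfl fun U _ => ?_
  field_simp
end

section
/- Let 𝒜 be the set of 10-tuples (u, u_1, u_2, u_3, v_1, v_2, v_3, w_1, w_2, w_3) with u, u_j positive integers, w_j nonzero integers, v_j integers, satisfying u_1 v_1 + u_2 v_2 + u_3 v_3 = 0, gcd(u_i, u_j) = 1 for i ≠ j, gcd(u_j, w_j) = 1 for each j, and gcd(w_i, w_j) = 1 for i ≠ j. Let 𝒲 be the set of integer sextuples (x_1, x_2, x_3, y_1, y_2, y_3) with x_1 y_2 y_3 + x_2 y_1 y_3 + x_3 y_1 y_2 = 0 and y_1 y_2 y_3 ≠ 0. Then the map sending a 10-tuple to (x_j,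 y_j) with x_j = w_j v_j, y_1 = u u_2 u_3 w_1, y_2 = u u_1 u_3 w_2, y_3 = u u_1 u_2 w_3 is a bijection from 𝒜 to 𝒲. -/
/-- The descent set `𝒜` of 10-tuples `(u, u₁, u₂, u₃, v₁, v₂, v₃, w₁, w₂, w₃)`. -/
def descentA : Set (ℤ × (Fin 3 → ℤ) × (Fin 3 → ℤ) × (Fin 3 → ℤ)) :=
  {t | 0 < t.1 ∧ (∀ j, 0 < t.2.1 j) ∧ (∀ j, t.2.2.2 j ≠ 0) ∧
    t.2.1 0 * t.2.2.1 0 + t.2.1 1 * t.2.2.1 1 + t.2.1 2 * t.2.2.1 2 = 0 ∧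
    (∀ i j, i ≠ j → IsCoprime (t.2.1 i) (t.2.1 j)) ∧
    (∀ j, IsCoprime (t.2.1 j) (t.2.2.2 j)) ∧
    (∀ i j, i ≠ j → IsCoprime (t.2.2.2 i) (t.2.2.2 j))}

/-- The set `𝒲` of integral solutions of the cubic with nonzero `y`-coordinates. -/
def solW : Set ((Fin 3 → ℤ) × (Fin 3 → ℤ)) :=
  {p | p.1 0 * p.2 1 * p.2 2 + p.1 1 * p.2 0 * p.2 2 + p.1 2 * p.2 0 * p.2 1 = 0 ∧
    p.2 0 * p.2 1 * p.2 2 ≠ 0}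

/-- The parametrizing map `x_j = w_j v_j`, `y₁ = u u₂ u₃ w₁`, `y₂ = u u₁ u₃ w₂`,
`y₃ = u u₁ u₂ w₃`. -/
def descentMap (t : ℤ × (Fin 3 → ℤ) × (Fin 3 → ℤ) × (Fin 3 → ℤ)) :
    (Fin 3 → ℤ) × (Fin 3 → ℤ) :=
  (fun j => t.2.2.2 j * t.2.2.1 j,
   ![t.1 * t.2.1 1 * t.2.1 2 * t.2.2.2 0,
     t.1 * t.2.1 0 * t.2.1 2 * t.2.2.2 1,
     t.1 * t.2.1 0 * t.2.1 1 * t.2.2.2 2])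

/-!
Write `y_j = u · u_{j+1} u_{j+2} · w_j` with indices mod 3. Conversely, given `y` with nonzero
entries, `u` is the gcd of `y₁, y₂, y₃`, and once it is divided out the gcd of the two entries
other than the `j`-th is `u_j`; what remains of the `j`-th entry is `w_j`. Substituting, the cubic
becomes `u² u₁u₂u₃ · (x₁u₁w₂w₃ + x₂u₂w₁w₃ + x₃u₃w₁w₂) = 0`, so `w_j ∣ x_j` by coprimality, and
`x_j = w_j v_j` turns the bracket into `w₁w₂w₃ (u₁v₁ + u₂v₂ + u₃v₃)`. Injectivity: `gcd(y_i, y_k)`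
for `{i, j, k} = {1, 2, 3}` is `u u_j`, and `u = gcd(u u₁, u u₂)`.
-/

open Finset Set

lemma Fin.eq_add_one_or_eq_add_two_of_ne {i j : Fin 3} (h : i ≠ j) : j = i + 1 ∨ j = i + 2 := by
  revert i j; decide

lemma Fin.forall_ne_of_forall_add_one_add_two {P : Fin 3 → Fin 3 → Prop}
    (hP : ∀ i j, P i j → P j i) (h : ∀ k, P (k + 1) (k + 2)) {i j : Fin 3} (hij : i ≠ j) :
    P i j := by
  rcases Fin.eq_add_one_or_eq_add_two_of_ne hij with rfl | rfl
  · simpa [add_assoc] using h (i + 2)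
  · exact hP _ _ (by simpa [add_assoc] using h (i + 1))

lemma Int.gcd_mul_left_of_isCoprime {n a b : ℤ} (hn : 0 ≤ n) (h : IsCoprime a b) :
    (Int.gcd (n * a) (n * b) : ℤ) = n := by
  rw [Int.gcd_mul_left, Int.isCoprime_iff_gcd_eq_one.mp h, mul_one, Int.natAbs_of_nonneg hn]

lemma descentMap_mk (u : ℤ) (a v w : Fin 3 → ℤ) :
    descentMap (u, a, v, w) =
      (fun j => w j * v j, fun j => u * a (j + 1) * a (j + 2) * w j) := by
  refine Prod.ext rfl (funext fun j => ?_)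
  fin_cases j
  · rfl
  · show u * a 0 * a 2 * w 1 = u * a 2 * a 0 * w 1
    ring
  · rfl

lemma mem_descentA_iff {u : ℤ} {a v w : Fin 3 → ℤ} :
    (u, a, v, w) ∈ descentA ↔ 0 < u ∧ (∀ j, 0 < a j) ∧ (∀ j, w j ≠ 0) ∧
      a 0 * v 0 + a 1 * v 1 + a 2 * v 2 = 0 ∧ (∀ i j, i ≠ j → IsCoprime (a i) (a j)) ∧
      (∀ j, IsCoprime (a j) (w j)) ∧ (∀ i j, i ≠ j → IsCoprime (w i) (w j)) :=
  Iff.rfl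

lemma cubic_eq_of_eq_descent_form {u : ℤ} {a w x y : Fin 3 → ℤ}
    (hy : ∀ j, y j = u * a (j + 1) * a (j + 2) * w j) :
    x 0 * y 1 * y 2 + x 1 * y 0 * y 2 + x 2 * y 0 * y 1 =
      u ^ 2 * (a 0 * a 1 * a 2) *
        (x 0 * a 0 * w 1 * w 2 + x 1 * a 1 * w 0 * w 2 + x 2 * a 2 * w 0 * w 1) := by
  simp only [hy, Fin.isValue, Fin.reduceAdd]
  ring

lemma descentMap_mapsTo : MapsTo descentMap descentA solW := by
  rintro ⟨u, a, v, w⟩ ⟨hu, ha, hw, hrel, -⟩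
  rw [descentMap_mk]
  refine ⟨?_, ?_⟩
  · rw [cubic_eq_of_eq_descent_form fun j => rfl]
    linear_combination u ^ 2 * (a 0 * a 1 * a 2) * (w 0 * w 1 * w 2) * hrel
  · have hy : ∀ j, u * a (j + 1) * a (j + 2) * w j ≠ 0 := fun j =>
      mul_ne_zero (mul_pos (mul_pos hu (ha _)) (ha _)).ne' (hw j)
    exact mul_ne_zero (mul_ne_zero (hy 0) (hy 1)) (hy 2)

lemma gcd_snd_descentMap {u : ℤ} {a v w : Fin 3 → ℤ} (ht : (u, a, v, w) ∈ descentA)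
    (j : Fin 3) :
    (Int.gcd ((descentMap (u, a, v, w)).2 (j + 1)) ((descentMap (u, a, v, w)).2 (j + 2)) : ℤ) =
      u * a j := by
  obtain ⟨hu, ha, -, -, haa, haw, hww⟩ := mem_descentA_iff.mp ht
  have hcop : IsCoprime (a (j + 2) * w (j + 1)) (a (j + 1) * w (j + 2)) :=
    ((haa _ _ (by simp)).mul_right (haw _)).mul_left ((haw _).symm.mul_right (hww _ _ (by simp)))
  convert Int.gcd_mul_left_of_isCoprime (mul_pos hu (ha j)).le hcop using 3 <;>
    simp only [descentMap_mk, add_assoc, Fin.isValue, Fin.reduceAdd, add_zero] <;> ring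

lemma descentMap_injOn : InjOn descentMap descentA := by
  rintro ⟨u, a, v, w⟩ ht ⟨u', a', v', w'⟩ ht' h
  have hua : ∀ j, u * a j = u' * a' j := fun j => by
    rw [← gcd_snd_descentMap ht, ← gcd_snd_descentMap ht', h]
  obtain ⟨hu, ha, hw, -, haa, -⟩ := mem_descentA_iff.mp ht
  obtain ⟨hu', -, -, -, haa', -⟩ := mem_descentA_iff.mp ht'
  obtain rfl : u = u' := by
    rw [← Int.gcd_mul_left_of_isCoprime hu.le (haa 0 1 (by decide)),
      ← Int.gcd_mul_left_of_isCoprime hu'.le (haa' 0 1 (by decide)), hua 0, hua 1]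
  obtain rfl : a = a' := funext fun j => mul_left_cancel₀ hu.ne' (hua j)
  rw [descentMap_mk, descentMap_mk, Prod.mk.injEq] at h
  obtain rfl : w = w' := funext fun j =>
    mul_left_cancel₀ (mul_pos (mul_pos hu (ha _)) (ha _)).ne' (congrFun h.2 j)
  obtain rfl : v = v' := funext fun j => mul_left_cancel₀ (hw j) (congrFun h.1 j)
  rfl

/-- For `z = y / u` primitive, `pairGcd z j` and `cofactor z j` are the `u_j` and `w_j` above. -/
def pairGcd (z : Fin 3 → ℤ) (j : Fin 3) : ℤ := Int.gcd (z (j + 1)) (z (j + 2))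

def cofactor (z : Fin 3 → ℤ) (j : Fin 3) : ℤ := z j / (pairGcd z (j + 1) * pairGcd z (j + 2))

section Factorization

variable {z : Fin 3 → ℤ}

lemma pairGcd_pos (hz : ∀ j, z j ≠ 0) (j : Fin 3) : 0 < pairGcd z j := by
  simpa [pairGcd] using Int.gcd_pos_of_ne_zero_left _ (hz (j + 1))

lemma pairGcd_dvd {i j : Fin 3} (hij : i ≠ j) : pairGcd z i ∣ z j := by
  rcases Fin.eq_add_one_or_eq_add_two_of_ne hij with rfl | rfl
  exacts [Int.gcd_dvd_left _ _, Int.gcd_dvd_right _ _]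

variable (hprim : univ.gcd z = 1)
include hprim

lemma isUnit_of_dvd_pairGcd_of_dvd {d : ℤ} {j : Fin 3} (hd : d ∣ pairGcd z j) (hdz : d ∣ z j) :
    IsUnit d := by
  refine isUnit_of_dvd_one (hprim ▸ Finset.dvd_gcd fun k _ => ?_)
  obtain rfl | hjk := eq_or_ne j k
  exacts [hdz, hd.trans (pairGcd_dvd hjk)]

lemma isCoprime_pairGcd {i j : Fin 3} (hij : i ≠ j) : IsCoprime (pairGcd z i) (pairGcd z j) :=
  isRelPrime_iff_isCoprime.mp fun _ hi hj =>
    isUnit_of_dvd_pairGcd_of_dvd hprim hi (hj.trans (pairGcd_dvd hij.symm))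

lemma pairGcd_mul_cofactor (j : Fin 3) :
    pairGcd z (j + 1) * pairGcd z (j + 2) * cofactor z j = z j :=
  Int.mul_ediv_cancel' <| (isCoprime_pairGcd hprim (by simp)).mul_dvd
    (pairGcd_dvd (by simp)) (pairGcd_dvd (by simp))

lemma cofactor_ne_zero (hz : ∀ j, z j ≠ 0) (j : Fin 3) : cofactor z j ≠ 0 := by
  intro h
  apply hz j
  rw [← pairGcd_mul_cofactor hprim, h, mul_zero]

lemma isCoprime_pairGcd_cofactor (j : Fin 3) : IsCoprime (pairGcd z j) (cofactor z j) :=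
  isRelPrime_iff_isCoprime.mp fun _ ha hw =>
    isUnit_of_dvd_pairGcd_of_dvd hprim ha
      (hw.trans (Dvd.intro_left _ (pairGcd_mul_cofactor hprim j)))

lemma isCoprime_cofactor (hz : ∀ j, z j ≠ 0) {i j : Fin 3} (hij : i ≠ j) :
    IsCoprime (cofactor z i) (cofactor z j) := by
  refine Fin.forall_ne_of_forall_add_one_add_two
    (P := fun i j => IsCoprime (cofactor z i) (cofactor z j)) (fun _ _ => IsCoprime.symm)
    (fun k => ?_) hij
  refine isRelPrime_iff_isCoprime.mp fun (d : ℤ) h₁ h₂ => isUnit_of_dvd_one ?_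
  have hk : pairGcd z k * d ∣ pairGcd z k := by
    refine Int.dvd_coe_gcd ?_ ?_
    · rw [← pairGcd_mul_cofactor hprim (k + 1)]
      simpa [add_assoc] using mul_dvd_mul (dvd_mul_left (pairGcd z k) (pairGcd z (k + 2))) h₁
    · rw [← pairGcd_mul_cofactor hprim (k + 2)]
      simpa [add_assoc] using mul_dvd_mul (dvd_mul_right (pairGcd z k) (pairGcd z (k + 1))) h₂
  exact (mul_dvd_mul_iff_left (pairGcd_pos hz k).ne').mp (by simpa using hk)

end Factorization

lemma Int.exists_eq_finsetGcd_mul {ι : Type*} [Fintype ι] {y : ι → ℤ} {i : ι} (hi : y i ≠ 0) :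
    ∃ u, 0 < u ∧ ∃ z : ι → ℤ, univ.gcd z = 1 ∧ ∀ j, y j = u * z j := by
  obtain ⟨z, hyz, hprim⟩ := Finset.extract_gcd y ⟨i, mem_univ i⟩
  refine ⟨univ.gcd y, Int.finsetGcd_nonneg.lt_of_ne fun h => hi ?_, z, hprim,
    fun j => hyz j (mem_univ j)⟩
  exact Finset.gcd_eq_zero_iff.mp h.symm i (mem_univ i)

lemma reduced_cubic_eq_zero {u : ℤ} {a w x y : Fin 3 → ℤ} (hu : u ≠ 0) (ha : ∀ j, a j ≠ 0)
    (hy : ∀ j, y j = u * a (j + 1) * a (j + 2) * w j)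
    (h : x 0 * y 1 * y 2 + x 1 * y 0 * y 2 + x 2 * y 0 * y 1 = 0) :
    x 0 * a 0 * w 1 * w 2 + x 1 * a 1 * w 0 * w 2 + x 2 * a 2 * w 0 * w 1 = 0 := by
  rw [cubic_eq_of_eq_descent_form hy] at h
  exact (mul_eq_zero.mp h).resolve_left (by simp [hu, ha])

lemma dvd_of_reduced_cubic_eq_zero {a w x : Fin 3 → ℤ} (haw : ∀ j, IsCoprime (a j) (w j))
    (hww : ∀ i j, i ≠ j → IsCoprime (w i) (w j))
    (h : x 0 * a 0 * w 1 * w 2 + x 1 * a 1 * w 0 * w 2 + x 2 * a 2 * w 0 * w 1 = 0)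
    (j : Fin 3) : w j ∣ x j := by
  have hcop : IsCoprime (w j) (a j * (w (j + 1) * w (j + 2))) :=
    (haw j).symm.mul_right ((hww _ _ (by simp)).mul_right (hww _ _ (by simp)))
  refine hcop.dvd_of_dvd_mul_right ?_
  fin_cases j <;>
    simp only [Fin.zero_eta, Fin.mk_one, Fin.reduceFinMk, Fin.isValue, Fin.reduceAdd]
  · exact ⟨-(x 1 * a 1 * w 2 + x 2 * a 2 * w 1), by linear_combination h⟩
  · exact ⟨-(x 0 * a 0 * w 2 + x 2 * a 2 * w 0), by linear_combination h⟩
  · exact ⟨-(x 0 * a 0 * w 1 + x 1 * a 1 * w 0), by linear_combination h⟩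

lemma descentMap_surjOn : SurjOn descentMap descentA solW := by
  rintro ⟨x, y⟩ ⟨hrel, hy⟩
  dsimp only at hrel hy
  have hy0 : ∀ j, y j ≠ 0 := fun j =>
    Finset.prod_ne_zero_iff.mp (by rwa [Fin.prod_univ_three]) j (mem_univ j)
  obtain ⟨u, hu, z, hprim, hyz⟩ := Int.exists_eq_finsetGcd_mul (hy0 0)
  have hz : ∀ j, z j ≠ 0 := fun j h => hy0 j (by rw [hyz, h, mul_zero])
  have hy' : ∀ j, y j = u * pairGcd z (j + 1) * pairGcd z (j + 2) * cofactor z j := fun j => by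
    rw [hyz, ← pairGcd_mul_cofactor hprim j]; ring
  have hred := reduced_cubic_eq_zero hu.ne' (fun j => (pairGcd_pos hz j).ne') hy' hrel
  have hx : ∀ j, x j = cofactor z j * (x j / cofactor z j) := fun j =>
    (Int.mul_ediv_cancel' (dvd_of_reduced_cubic_eq_zero (isCoprime_pairGcd_cofactor hprim)
      (fun _ _ => isCoprime_cofactor hprim hz) hred j)).symm
  refine ⟨(u, pairGcd z, fun j => x j / cofactor z j, cofactor z), ⟨hu, pairGcd_pos hz,
    cofactor_ne_zero hprim hz, ?_, fun _ _ => isCoprime_pairGcd hprim,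
    isCoprime_pairGcd_cofactor hprim, fun _ _ => isCoprime_cofactor hprim hz⟩, ?_⟩
  · rw [hx 0, hx 1, hx 2] at hred
    have hw := cofactor_ne_zero hprim hz
    refine (mul_eq_zero.mp ?_).resolve_left (mul_ne_zero (mul_ne_zero (hw 0) (hw 1)) (hw 2))
    linear_combination hred
  · rw [descentMap_mk]
    exact Prod.ext (funext fun j => (hx j).symm) (funext fun j => (hy' j).symm)

/-- Lemma 1: the map is a bijection from `𝒜` onto `𝒲`. -/
theorem descent_bijection : Set.BijOn descentMap descentA solW :=
  ⟨descentMap_mapsTo, descentMap_injOn, descentMap_surjOn⟩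
end

section
/- Let u_1, u_2, u_3 be positive integers that are pairwise coprime. Then every integer solution (v_1, v_2, v_3) of u_1 v_1 + u_2 v_2 + u_3 v_3 = 0 can be written as v_1 = u_2 r_3 - u_3 r_2, v_2 = u_3 r_1 - u_1 r_3, v_3 = u_1 r_2 - u_2 r_1 for some integers r_1, r_2, r_3; moreover r can be chosen with r_1 in any prescribed complete set of residues modulo u_1, and with that normalization the representation is unique. -/
/-!
Solutions `v` of `u ⬝ v = 0` are the cross products `u × r`. Given `r₁`, the second coordinate
forces `u₃ r₁ ≡ v₂ (mod u₁)`, and conversely this congruence lets one solve for `r₃` and then,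
using `u ⬝ v = 0` and `gcd(u₁, u₃) = 1`, for `r₂`; both are unique since `u₁ ≠ 0`. As `u₃` is
invertible mod `u₁`, the admissible `r₁` form a single residue class mod `u₁`, which meets the
set of representatives exactly once.
-/

section CrossProduct

variable {R : Type*} [CommRing R] [IsDomain R] {u₁ u₂ u₃ v₁ v₂ v₃ r₁ : R}

theorem exists_cross_eq_of_dvd (hu₁ : u₁ ≠ 0) (h13 : IsCoprime u₁ u₃)
    (hv : u₁ * v₁ + u₂ * v₂ + u₃ * v₃ = 0) (hr₁ : u₁ ∣ u₃ * r₁ - v₂) :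
    ∃ r₂ r₃, v₁ = u₂ * r₃ - u₃ * r₂ ∧ v₂ = u₃ * r₁ - u₁ * r₃ ∧ v₃ = u₁ * r₂ - u₂ * r₁ := by
  obtain ⟨r₃, hr₃⟩ := hr₁
  have hdvd : u₁ ∣ u₃ * (v₃ + u₂ * r₁) :=
    ⟨u₂ * r₃ - v₁, by linear_combination u₂ * hr₃ + hv⟩
  obtain ⟨r₂, hr₂⟩ := h13.dvd_of_dvd_mul_left hdvd
  refine ⟨r₂, r₃, mul_left_cancel₀ hu₁ ?_, by linear_combination -hr₃,
    by linear_combination hr₂⟩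
  linear_combination u₂ * hr₃ - u₃ * hr₂ + hv

theorem cross_eq_unique (hu₁ : u₁ ≠ 0) {r₂ r₃ s₂ s₃ : R}
    (hr₂ : v₃ = u₁ * r₂ - u₂ * r₁) (hr₃ : v₂ = u₃ * r₁ - u₁ * r₃)
    (hs₂ : v₃ = u₁ * s₂ - u₂ * r₁) (hs₃ : v₂ = u₃ * r₁ - u₁ * s₃) :
    r₂ = s₂ ∧ r₃ = s₃ :=
  ⟨mul_left_cancel₀ hu₁ (by linear_combination hs₂ - hr₂),
    mul_left_cancel₀ hu₁ (by linear_combination hr₃ - hs₃)⟩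

end CrossProduct

theorem Int.modEq_mul_iff_dvd_mul_sub {n c b x y : ℤ} (hb : b * c ≡ 1 [ZMOD n]) :
    x ≡ b * y [ZMOD n] ↔ n ∣ c * x - y := by
  rw [← Int.modEq_iff_dvd]
  constructor
  · intro h
    calc y = 1 * y := (one_mul y).symm
      _ ≡ b * c * y [ZMOD n] := hb.symm.mul_right y
      _ = c * (b * y) := by ring
      _ ≡ c * x [ZMOD n] := (h.mul_left c).symm
  · intro h
    calc x = 1 * x := (one_mul x).symm
      _ ≡ b * c * x [ZMOD n] := hb.symm.mul_right x
      _ = b * (c * x) := by ring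
      _ ≡ b * y [ZMOD n] := h.symm.mul_left b

theorem lattice_parametrization_general
    (u₁ u₂ u₃ : ℤ) (hu₁ : 0 < u₁)
    (h13 : IsCoprime u₁ u₃)
    (S : Set ℤ) (hS : ∀ m : ℤ, ∃! r, r ∈ S ∧ r ≡ m [ZMOD u₁])
    (v₁ v₂ v₃ : ℤ) (hv : u₁ * v₁ + u₂ * v₂ + u₃ * v₃ = 0) :
    ∃! r : ℤ × ℤ × ℤ, r.1 ∈ S ∧
      v₁ = u₂ * r.2.2 - u₃ * r.2.1 ∧
      v₂ = u₃ * r.1 - u₁ * r.2.2 ∧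
      v₃ = u₁ * r.2.1 - u₂ * r.1 := by
  have ⟨a, b, hab⟩ := h13
  have hb : b * u₃ ≡ 1 [ZMOD u₁] :=
    (Int.modEq_iff_dvd.2 ⟨-a, by linear_combination hab⟩).symm
  obtain ⟨r₁, ⟨hr₁S, hr₁⟩, hr₁_unique⟩ := hS (b * v₂)
  obtain ⟨r₂, r₃, hr⟩ := exists_cross_eq_of_dvd hu₁.ne' h13 hv
    ((Int.modEq_mul_iff_dvd_mul_sub hb).1 hr₁)
  refine ⟨(r₁, r₂, r₃), ⟨hr₁S, hr⟩, ?_⟩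
  rintro ⟨s₁, s₂, s₃⟩ ⟨hs₁S, hs₁, hs₂, hs₃⟩
  obtain rfl : s₁ = r₁ := hr₁_unique s₁
    ⟨hs₁S, (Int.modEq_mul_iff_dvd_mul_sub hb).2 ⟨s₃, by linear_combination -hs₂⟩⟩
  obtain ⟨rfl, rfl⟩ := cross_eq_unique hu₁.ne' hs₃ hs₂ hr.2.2 hr.2.1
  rfl

/-- Lattice parametrization: if `u₁, u₂, u₃` are pairwise coprime positive integers and `S` is
a complete set of residues mod `u₁`, then every integer solution of
`u₁v₁ + u₂v₂ + u₃v₃ = 0` has a unique representation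
`v₁ = u₂r₃ - u₃r₂`, `v₂ = u₃r₁ - u₁r₃`, `v₃ = u₁r₂ - u₂r₁` with `r₁ ∈ S`. -/
theorem lattice_parametrization
    (u₁ u₂ u₃ : ℤ) (hu₁ : 0 < u₁) (hu₂ : 0 < u₂) (hu₃ : 0 < u₃)
    (h12 : IsCoprime u₁ u₂) (h13 : IsCoprime u₁ u₃) (h23 : IsCoprime u₂ u₃)
    (S : Set ℤ) (hS : ∀ m : ℤ, ∃! r, r ∈ S ∧ r ≡ m [ZMOD u₁])
    (v₁ v₂ v₃ : ℤ) (hv : u₁ * v₁ + u₂ * v₂ + u₃ * v₃ = 0) :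
    ∃! r : ℤ × ℤ × ℤ, r.1 ∈ S ∧
      v₁ = u₂ * r.2.2 - u₃ * r.2.1 ∧
      v₂ = u₃ * r.1 - u₁ * r.2.2 ∧
      v₃ = u₁ * r.2.1 - u₂ * r.1 :=
  lattice_parametrization_general u₁ u₂ u₃ hu₁ h13 S hS v₁ v₂ v₃ hv
end

section
/- Let A_1, A_2 ≥ 1 be reals, and let u_1, u_2, u_3 be pairwise coprime positive integers with u_3 ≤ A_2. Then the number of integer triples (v_1, v_2, v_3) with u_1 v_1 + u_2 v_2 + u_3 v_3 = 0, |v_1| ≤ A_1 and |v_2| ≤ A_2 is O(A_1 A_2 / u_3), with an absolute implied constant. -/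
/-!
A solution is determined by `(v₁, v₂)`, and `v₃` exists iff `u₃ ∣ u₁v₁ + u₂v₂`. Since `u₂` is
invertible mod `u₃`, for each of the at most `2A₁ + 1` choices of `v₁` this pins `v₂` to one
residue class mod `u₃`, which meets `[-A₂, A₂]` in at most `(2A₂ + 1)/u₃ + 1 ≤ 4A₂/u₃` points
because `u₃ ≤ A₂`.
-/

open Finset

namespace Int

lemma card_Icc_filter_modEq_le {a b : ℤ} (hab : a ≤ b) (v : ℤ) {r : ℤ} (hr : 0 < r) :
    (#{x ∈ Icc a b | x ≡ v [ZMOD r]} : ℝ) ≤ (b - a + 1) / r + 1 := by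
  have hcard := Ioc_filter_modEq_card (a - 1) b hr v
  rw [Ioc_sub_one_left_eq_Icc] at hcard
  have hQ : ((#{x ∈ Icc a b | x ≡ v [ZMOD r]} : ℤ) : ℚ) ≤ (b - a + 1) / r + 1 := by
    have hlen : (0 : ℚ) ≤ b - a + 1 := by exact_mod_cast (by omega : (0 : ℤ) ≤ b - a + 1)
    rw [hcard]
    push_cast
    refine max_le ?_ (by positivity)
    have hupper := floor_le (((b : ℚ) - v) / r)
    have hlower := lt_floor_add_one (((a : ℚ) - 1 - v) / r)
    have hdiff : ((b : ℚ) - v) / r - ((a : ℚ) - 1 - v) / r = (b - a + 1) / r := by ring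
    linarith
  exact_mod_cast (Rat.cast_le (K := ℝ)).mpr hQ

lemma abs_le_iff_mem_Icc_floor (A : ℝ) (x : ℤ) : |(x : ℝ)| ≤ A ↔ x ∈ Icc (-⌊A⌋) ⌊A⌋ := by
  rw [abs_le, mem_Icc, neg_le (a := ⌊A⌋), le_floor, le_floor, cast_neg, neg_le]

lemma card_Icc_neg_floor_floor_le {A : ℝ} (hA : 0 ≤ A) : (#(Icc (-⌊A⌋) ⌊A⌋) : ℝ) ≤ 2 * A + 1 := by
  have hcard : (#(Icc (-⌊A⌋) ⌊A⌋) : ℤ) = 2 * ⌊A⌋ + 1 := by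
    rw [card_Icc]
    have hfloor := floor_nonneg.mpr hA
    omega
  have hfloor_le : (⌊A⌋ : ℝ) ≤ A := floor_le A
  rw [← Int.cast_natCast, hcard]
  push_cast
  linarith

lemma card_Icc_neg_floor_floor_filter_modEq_le {A : ℝ} (hA : 0 ≤ A) (v : ℤ) {r : ℤ} (hr : 0 < r) :
    (#{y ∈ Icc (-⌊A⌋) ⌊A⌋ | y ≡ v [ZMOD r]} : ℝ) ≤ (2 * A + 1) / r + 1 := by
  have hfloor : 0 ≤ ⌊A⌋ := floor_nonneg.mpr hA
  have hfloor_le : (⌊A⌋ : ℝ) ≤ A := floor_le A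
  calc (#{y ∈ Icc (-⌊A⌋) ⌊A⌋ | y ≡ v [ZMOD r]} : ℝ)
      ≤ ((⌊A⌋ : ℝ) - (-⌊A⌋ : ℤ) + 1) / r + 1 := card_Icc_filter_modEq_le (by omega) v hr
    _ ≤ (2 * A + 1) / r + 1 := by
      gcongr
      push_cast
      linarith

lemma exists_dvd_add_mul_iff_modEq {k m : ℤ} (h : IsCoprime k m) (x : ℤ) :
    ∃ c, ∀ y, m ∣ x + k * y ↔ y ≡ c [ZMOD m] := by
  obtain ⟨a, b, hab⟩ := h
  refine ⟨-a * x, fun y => ?_⟩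
  rw [modEq_comm, modEq_iff_dvd]
  constructor
  · intro hy
    have : y - -a * x = a * (x + k * y) + m * (b * y) := by linear_combination (-y) * hab
    rw [this]
    exact dvd_add (hy.mul_left a) (dvd_mul_right m _)
  · intro hy
    have : x + k * y = k * (y - -a * x) + m * (b * x) := by linear_combination (-x) * hab
    rw [this]
    exact dvd_add (hy.mul_left k) (dvd_mul_right m _)

end Int

lemma card_filter_product_eq_sum {α β : Type*} (s : Finset α) (t : Finset β) (P : α → β → Prop)
    [∀ x, DecidablePred (P x)] :
    #{p ∈ s ×ˢ t | P p.1 p.2} = ∑ x ∈ s, #{y ∈ t | P x y} := by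
  simp only [card_filter, sum_product]

lemma card_Icc_floor_product_filter_dvd_le {A₁ A₂ : ℝ} (hA₁ : 0 ≤ A₁) (hA₂ : 0 ≤ A₂) (j : ℤ) {k m : ℤ}
    (hkm : IsCoprime k m) (hm : 0 < m) :
    (#{p ∈ Icc (-⌊A₁⌋) ⌊A₁⌋ ×ˢ Icc (-⌊A₂⌋) ⌊A₂⌋ | m ∣ j * p.1 + k * p.2} : ℝ) ≤
      (2 * A₁ + 1) * ((2 * A₂ + 1) / m + 1) := by
  have hfiber (x : ℤ) :
      (#{y ∈ Icc (-⌊A₂⌋) ⌊A₂⌋ | m ∣ j * x + k * y} : ℝ) ≤ (2 * A₂ + 1) / m + 1 := by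
    obtain ⟨c, hc⟩ := Int.exists_dvd_add_mul_iff_modEq hkm (j * x)
    simp only [hc]
    exact Int.card_Icc_neg_floor_floor_filter_modEq_le hA₂ c hm
  rw [card_filter_product_eq_sum (P := fun x y => m ∣ j * x + k * y), Nat.cast_sum]
  calc ∑ x ∈ Icc (-⌊A₁⌋) ⌊A₁⌋, (#{y ∈ Icc (-⌊A₂⌋) ⌊A₂⌋ | m ∣ j * x + k * y} : ℝ)
      ≤ #(Icc (-⌊A₁⌋) ⌊A₁⌋) * ((2 * A₂ + 1) / m + 1) := by
        simpa only [nsmul_eq_mul] using sum_le_card_nsmul _ _ _ fun x _ => hfiber x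
    _ ≤ (2 * A₁ + 1) * ((2 * A₂ + 1) / m + 1) := by
        gcongr
        exact Int.card_Icc_neg_floor_floor_le hA₁

lemma ncard_linear_solutions_le {a b c : ℤ} (hc : c ≠ 0) (s t : Finset ℤ) :
    {v : ℤ × ℤ × ℤ | a * v.1 + b * v.2.1 + c * v.2.2 = 0 ∧ v.1 ∈ s ∧ v.2.1 ∈ t}.ncard ≤
      #{p ∈ s ×ˢ t | c ∣ a * p.1 + b * p.2} := by
  rw [← Set.ncard_coe_finset]
  refine Set.ncard_le_ncard_of_injOn (fun v => (v.1, v.2.1)) ?_ ?_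
  · rintro ⟨x, y, z⟩ ⟨hxyz, hx, hy⟩
    simp only [coe_filter, mem_product, Set.mem_ofPred_eq]
    exact ⟨⟨hx, hy⟩, -z, by linear_combination hxyz⟩
  · rintro ⟨x, y, z⟩ ⟨hxyz, -⟩ ⟨x', y', z'⟩ ⟨hxyz', -⟩ h
    simp only [Prod.mk.injEq] at h ⊢
    obtain ⟨rfl, rfl⟩ := h
    exact ⟨rfl, rfl, mul_left_cancel₀ hc (by linear_combination hxyz - hxyz')⟩

/-- Lemma 4: for `A₁, A₂ ≥ 1` and pairwise coprime positive `u₁, u₂, u₃` with `u₃ ≤ A₂`, the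
number of integer solutions of `u₁v₁ + u₂v₂ + u₃v₃ = 0` with `|v₁| ≤ A₁`, `|v₂| ≤ A₂` is
`O(A₁A₂/u₃)` with an absolute implied constant. -/
theorem linear_equation_count :
    ∃ C : ℝ, 0 < C ∧
      ∀ (A₁ A₂ : ℝ) (u₁ u₂ u₃ : ℕ),
        1 ≤ A₁ → 1 ≤ A₂ → 0 < u₁ → 0 < u₂ → 0 < u₃ →
        Nat.Coprime u₁ u₂ → Nat.Coprime u₁ u₃ → Nat.Coprime u₂ u₃ →
        (u₃ : ℝ) ≤ A₂ →
        (Set.ncard {v : ℤ × ℤ × ℤ |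
            (u₁ : ℤ) * v.1 + (u₂ : ℤ) * v.2.1 + (u₃ : ℤ) * v.2.2 = 0 ∧
            (|v.1| : ℝ) ≤ A₁ ∧ (|v.2.1| : ℝ) ≤ A₂} : ℝ)
          ≤ C * A₁ * A₂ / u₃ := by
  refine ⟨12, by norm_num, fun A₁ A₂ u₁ u₂ u₃ hA₁ hA₂ _ _ hu₃ _ _ h23 hu₃A₂ => ?_⟩
  have hu₃R : (0 : ℝ) < u₃ := by exact_mod_cast hu₃
  have hcop : IsCoprime (u₂ : ℤ) u₃ := Nat.isCoprime_iff_coprime.mpr h23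
  simp only [Int.abs_le_iff_mem_Icc_floor]
  calc _ ≤ (#{p ∈ Icc (-⌊A₁⌋) ⌊A₁⌋ ×ˢ Icc (-⌊A₂⌋) ⌊A₂⌋ | (u₃ : ℤ) ∣ u₁ * p.1 + u₂ * p.2} : ℝ) :=
        by exact_mod_cast ncard_linear_solutions_le (by omega) _ _
    _ ≤ (2 * A₁ + 1) * ((2 * A₂ + 1) / u₃ + 1) :=
        card_Icc_floor_product_filter_dvd_le (by linarith) (by linarith) _ hcop (by exact_mod_cast hu₃)
    _ ≤ (3 * A₁) * (4 * A₂ / u₃) := by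
        gcongr
        · linarith
        · rw [div_add_one hu₃R.ne']
          gcongr
          linarith
    _ = 12 * A₁ * A₂ / u₃ := by ring
end

section
/- For P ≥ 1 and a subset 𝒵 ⊆ {1, 2, ..., ⌊P⌋} of cardinality Z, the number of integer solutions (x, y) of x_1 y_2 y_3 + x_2 y_1 y_3 + x_3 y_1 y_2 = 0 with y_1 y_2 y_3 ≠ 0, |x_j| ≤ P, |y_j| ≤ P for all j, and |y_j| ∈ 𝒵 for at least one j ∈ {1,2,3}, is O_ε(P^{2+ε} Z) for every ε > 0. -/
/-!
Fix the coordinate `y₀ = a`; since `|a| ∈ 𝒵` it takes at most `2 Z` values, and the other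
coordinates reduce to this one by the symmetry of the equation. For fixed `a`, multiplying the
equation by `x₀` gives `(x₀ y₁ + a x₁)(x₀ y₂ + a x₂) = a² x₁ x₂`. So once `x₁, x₂` are chosen
(`≪ P²` ways) the two factors form a divisor pair of a nonzero integer of size `≤ P⁴`, and then
`(x₀, y₁)` is a divisor pair of `x₀ y₁`, which determines `y₂`. When some `xᵢ` vanishes the
equation degenerates to a single relation `u v = w` with `w` fixed by two free coordinates. The
divisor bound `d(n) ≪_δ n^δ` makes every divisor-pair choice cost only `P^{O(δ)}`.
-/

open Finset Real

theorem natCast_add_one_le_mul_two_rpow {δ : ℝ} (hδ : 0 < δ) (k : ℕ) :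
    (k + 1 : ℝ) ≤ (1 + 1 / (δ * Real.log 2)) * 2 ^ (δ * k) := by
  set c := δ * Real.log 2
  have hc : 0 < c := mul_pos hδ (Real.log_pos one_lt_two)
  have hexp : 1 + c * k ≤ (2 : ℝ) ^ (δ * k) := by
    rw [rpow_def_of_pos two_pos]
    linarith [add_one_le_exp (Real.log 2 * (δ * k))]
  calc (k + 1 : ℝ) ≤ (1 + 1 / c) * (1 + c * k) := by
        rw [show (1 + 1 / c) * (1 + c * k) = k + 1 + (c * k + 1 / c) by field_simp; ring]
        have : 0 ≤ c * k + 1 / c := by positivity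
        linarith
    _ ≤ (1 + 1 / c) * 2 ^ (δ * k) := by gcongr

theorem natCast_add_one_le_pow_rpow {x δ : ℝ} (hx : 0 ≤ x) (h2 : 2 ≤ x ^ δ) (k : ℕ) :
    (k + 1 : ℝ) ≤ (x ^ k) ^ δ :=
  calc (k + 1 : ℝ) ≤ 2 ^ k := by exact_mod_cast Nat.lt_two_pow_self
    _ ≤ (x ^ δ) ^ k := by gcongr
    _ = (x ^ k) ^ δ := rpow_pow_comm hx δ k

/-- `K ^ (B + 1)`, where `K` bounds `(k + 1) / 2 ^ (δ k)` and every prime `p` with `p ^ δ < 2`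
is at most `B`. -/
noncomputable def divisorBoundConstant (δ : ℝ) : ℝ :=
  (1 + 1 / (δ * Real.log 2)) ^ (⌈(2 : ℝ) ^ (1 / δ)⌉₊ + 1)

theorem one_le_divisorBoundConstant {δ : ℝ} (hδ : 0 < δ) : 1 ≤ divisorBoundConstant δ :=
  one_le_pow₀ (le_add_of_nonneg_right (by have := Real.log_pos one_lt_two; positivity))

theorem Nat.card_divisors_le_mul_rpow {δ : ℝ} (hδ : 0 < δ) {n : ℕ} (hn : n ≠ 0) :
    (#n.divisors : ℝ) ≤ divisorBoundConstant δ * n ^ δ := by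
  set K : ℝ := 1 + 1 / (δ * Real.log 2)
  set B : ℕ := ⌈(2 : ℝ) ^ (1 / δ)⌉₊
  have hK : 1 ≤ K := le_add_of_nonneg_right (by have := Real.log_pos one_lt_two; positivity)
  have hfactor : ∀ p ∈ n.primeFactors, (n.factorization p + 1 : ℝ) ≤
      (if p ≤ B then K else 1) * ((p : ℝ) ^ n.factorization p) ^ δ := by
    intro p hp
    have hp2 : (2 : ℝ) ≤ p := by exact_mod_cast (Nat.prime_of_mem_primeFactors hp).two_le
    split_ifs with hpB
    · calc (n.factorization p + 1 : ℝ) ≤ K * 2 ^ (δ * n.factorization p) :=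
            natCast_add_one_le_mul_two_rpow hδ _
        _ ≤ K * (p : ℝ) ^ (δ * n.factorization p) := by gcongr
        _ = K * ((p : ℝ) ^ n.factorization p) ^ δ := by
            rw [mul_comm δ, rpow_natCast_mul (by positivity)]
    · rw [one_mul]
      refine natCast_add_one_le_pow_rpow (by positivity) ?_ _
      have hB : (2 : ℝ) ^ (1 / δ) < p := (Nat.le_ceil _).trans_lt (by exact_mod_cast not_le.1 hpB)
      calc (2 : ℝ) = ((2 : ℝ) ^ (1 / δ)) ^ δ := by
            rw [← rpow_mul zero_le_two, one_div_mul_cancel hδ.ne', rpow_one]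
        _ ≤ (p : ℝ) ^ δ := by gcongr
  have hsmall : ∏ p ∈ n.primeFactors, (if p ≤ B then K else 1) ≤ K ^ (B + 1) := by
    rw [prod_ite, prod_const, prod_const_one, mul_one]
    refine pow_le_pow_right₀ hK ((card_le_card fun p hp => ?_).trans (card_range (B + 1)).le)
    exact mem_range_succ_iff.2 (mem_filter.1 hp).2
  calc (#n.divisors : ℝ) = ∏ p ∈ n.primeFactors, (n.factorization p + 1 : ℝ) := by
        rw [Nat.card_divisors hn]; push_cast; rfl
    _ ≤ ∏ p ∈ n.primeFactors, (if p ≤ B then K else 1) * ((p : ℝ) ^ n.factorization p) ^ δ :=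
        prod_le_prod (fun _ _ => by positivity) hfactor
    _ = (∏ p ∈ n.primeFactors, (if p ≤ B then K else 1)) * n ^ δ := by
        rw [prod_mul_distrib, finsetProd_rpow _ _ (fun _ _ => by positivity)]
        congr
        exact_mod_cast Nat.prod_factorization_pow_eq_self hn
    _ ≤ K ^ (B + 1) * n ^ δ := by gcongr

theorem Int.card_divisors (z : ℤ) : #z.divisors = 2 * #z.natAbs.divisors := by
  rw [Int.divisors, card_disjUnion, card_map, card_map, two_mul]

theorem Int.card_divisorsAntidiag (z : ℤ) : #z.divisorsAntidiag = #z.divisors := by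
  rw [← Int.image_fst_divisorsAntidiag, card_image_of_injOn]
  rintro ⟨a, b⟩ hab ⟨a', b'⟩ hab' (rfl : a = a')
  obtain ⟨h, hz⟩ := Int.mem_divisorsAntidiag.1 hab
  have ha : a ≠ 0 := by rintro rfl; exact hz (by simpa using h.symm)
  exact Prod.ext rfl (mul_left_cancel₀ ha (h.trans (Int.mem_divisorsAntidiag.1 hab').1.symm))

noncomputable def maxCardDivisorsAntidiag (R : ℕ) : ℕ :=
  (Icc (-(R : ℤ)) R).sup fun z => #z.divisorsAntidiag

theorem card_divisorsAntidiag_le_maxCardDivisorsAntidiag {z : ℤ} {R : ℕ} (hz : z.natAbs ≤ R) :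
    #z.divisorsAntidiag ≤ maxCardDivisorsAntidiag R :=
  le_sup (f := fun z : ℤ => #z.divisorsAntidiag) (mem_Icc.2 (by omega))

theorem maxCardDivisorsAntidiag_mono : Monotone maxCardDivisorsAntidiag := fun _ _ h =>
  sup_mono (Icc_subset_Icc (by simpa using h) (by simpa using h))

theorem one_le_maxCardDivisorsAntidiag {R : ℕ} (hR : 1 ≤ R) : 1 ≤ maxCardDivisorsAntidiag R :=
  le_trans (by simp [Int.divisorsAntidiagonal_one])
    (card_divisorsAntidiag_le_maxCardDivisorsAntidiag (z := 1) hR)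

theorem maxCardDivisorsAntidiag_le_mul_rpow {δ : ℝ} (hδ : 0 < δ) (R : ℕ) :
    (maxCardDivisorsAntidiag R : ℝ) ≤ 2 * divisorBoundConstant δ * R ^ δ := by
  obtain ⟨z, hz, hmax⟩ := exists_mem_eq_sup (Icc (-(R : ℤ)) R) (nonempty_Icc.2 (by omega))
    fun z => #z.divisorsAntidiag
  rw [maxCardDivisorsAntidiag, hmax, Int.card_divisorsAntidiag, Int.card_divisors, Nat.cast_mul,
    Nat.cast_two, mul_assoc]
  have hK := one_le_divisorBoundConstant hδ
  rcases eq_or_ne z 0 with rfl | hz0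
  · rw [Int.natAbs_zero, Nat.divisors_zero, card_empty, Nat.cast_zero, mul_zero]
    positivity
  gcongr
  refine (Nat.card_divisors_le_mul_rpow hδ (Int.natAbs_ne_zero.2 hz0)).trans
    (mul_le_mul_of_nonneg_left ?_ (zero_le_one.trans hK))
  gcongr
  have := mem_Icc.1 hz
  omega

theorem card_le_maxCardDivisorsAntidiag_mul_card {α β : Type*} [DecidableEq β]
    {s : Finset α} {t : Finset β} {f : α → β} (hf : ∀ x ∈ s, f x ∈ t) (g : α → ℤ × ℤ)
    (hfg : ∀ x ∈ s, ∀ y ∈ s, f x = f y → g x = g y → x = y) (F : β → ℤ)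
    (hg : ∀ x ∈ s, g x ∈ (F (f x)).divisorsAntidiag) {R : ℕ} (hR : ∀ x ∈ s, (F (f x)).natAbs ≤ R) :
    #s ≤ maxCardDivisorsAntidiag R * #t := by
  refine card_le_mul_card_image_of_maps_to hf _ fun b _ => ?_
  rcases {x ∈ s | f x = b}.eq_empty_or_nonempty with h | ⟨x, hx⟩
  · simp [h]
  obtain ⟨hxs, rfl⟩ := mem_filter.1 hx
  refine (card_le_card_of_injOn g (fun y hy => ?_) fun y hy z hz hyz => ?_).trans
    (card_divisorsAntidiag_le_maxCardDivisorsAntidiag (hR x hxs))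
  · obtain ⟨hys, hyx⟩ := mem_filter.1 hy
    simpa [hyx] using hg y hys
  · obtain ⟨hys, hyx⟩ := mem_filter.1 hy
    obtain ⟨hzs, hzx⟩ := mem_filter.1 hz
    exact hfg y hys z hzs (hyx.trans hzx.symm) hyz

theorem Int.card_Icc_neg_natCast (N : ℕ) : #(Icc (-(N : ℤ)) N) = 2 * N + 1 := by
  simp only [Int.card_Icc]
  omega

theorem funext_fin_three {α : Type*} {x y : Fin 3 → α} (h0 : x 0 = y 0) (h1 : x 1 = y 1)
    (h2 : x 2 = y 2) : x = y := by
  ext i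
  fin_cases i <;> assumption

theorem Int.natAbs_mul_le_sq {N : ℕ} {x y : ℤ} (hx : x.natAbs ≤ N) (hy : y.natAbs ≤ N) :
    (x * y).natAbs ≤ N ^ 2 := by
  rw [Int.natAbs_mul, sq]
  exact Nat.mul_le_mul hx hy

namespace ThreeFractions

/-- For nonvanishing `y`, `form x y = 0` says `x 0 / y 0 + x 1 / y 1 + x 2 / y 2 = 0`. -/
def form (x y : Fin 3 → ℤ) : ℤ := x 0 * y 1 * y 2 + x 1 * y 0 * y 2 + x 2 * y 0 * y 1

noncomputable def box (N : ℕ) : Finset (Fin 3 → ℤ) := Fintype.piFinset fun _ => Icc (-(N : ℤ)) N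

noncomputable def solutions (N : ℕ) : Finset ((Fin 3 → ℤ) × (Fin 3 → ℤ)) :=
  {p ∈ box N ×ˢ box N | form p.1 p.2 = 0 ∧ ∀ j, p.2 j ≠ 0}

theorem mem_box {N : ℕ} {x : Fin 3 → ℤ} : x ∈ box N ↔ ∀ i, (x i).natAbs ≤ N := by
  simp only [box, Fintype.mem_piFinset, mem_Icc]
  exact forall_congr' fun i => by omega

theorem mem_solutions {N : ℕ} {p : (Fin 3 → ℤ) × (Fin 3 → ℤ)} :
    p ∈ solutions N ↔
      (∀ i, (p.1 i).natAbs ≤ N) ∧ (∀ i, (p.2 i).natAbs ≤ N) ∧ form p.1 p.2 = 0 ∧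
        ∀ j, p.2 j ≠ 0 := by
  simp [solutions, mem_box, and_assoc]

theorem form_comp_swap (x y : Fin 3 → ℤ) (i j : Fin 3) :
    form (x ∘ Equiv.swap i j) (y ∘ Equiv.swap i j) = form x y := by
  fin_cases i <;> fin_cases j <;> simp [form, Equiv.swap_apply_of_ne_of_ne] <;> ring

theorem card_filter_solutions_comp_swap (N : ℕ) (i j : Fin 3)
    (Q : (Fin 3 → ℤ) × (Fin 3 → ℤ) → Prop) [DecidablePred Q] :
    #{p ∈ solutions N | Q (p.1 ∘ Equiv.swap i j, p.2 ∘ Equiv.swap i j)} =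
      #{p ∈ solutions N | Q p} := by
  set σ : (Fin 3 → ℤ) × (Fin 3 → ℤ) → (Fin 3 → ℤ) × (Fin 3 → ℤ) :=
    fun p => (p.1 ∘ Equiv.swap i j, p.2 ∘ Equiv.swap i j)
  have hσσ : ∀ p, σ (σ p) = p := fun p => by ext <;> simp [σ]
  have hσ : ∀ p ∈ solutions N, σ p ∈ solutions N := by
    simp only [mem_solutions]
    rintro p ⟨hx, hy, hform, hy0⟩
    exact ⟨fun _ => hx _, fun _ => hy _, (form_comp_swap _ _ i j).trans hform, fun _ => hy0 _⟩
  refine card_nbij' σ σ (fun p hp => ?_) (fun p hp => ?_) (fun p _ => hσσ p) (fun p _ => hσσ p)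
  · obtain ⟨hp, hQ⟩ := mem_filter.1 hp
    exact mem_filter.2 ⟨hσ p hp, hQ⟩
  · obtain ⟨hp, hQ⟩ := mem_filter.1 hp
    exact mem_filter.2 ⟨hσ p hp, show Q (σ (σ p)) by rwa [hσσ]⟩

/- In the names below, a *slice* is the set of solutions with `y 0 = a`. -/

theorem card_slice_of_x0_eq_zero_of_x2_eq_zero (N : ℕ) (a : ℤ) :
    #{p ∈ solutions N | p.2 0 = a ∧ p.1 0 = 0 ∧ p.1 2 = 0} ≤ (2 * N + 1) ^ 2 := by
  have hx : ∀ p ∈ {p ∈ solutions N | p.2 0 = a ∧ p.1 0 = 0 ∧ p.1 2 = 0}, p.1 = 0 := by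
    intro p hp
    simp only [mem_filter, mem_solutions] at hp
    obtain ⟨⟨-, -, hform, hy⟩, -, hx0, hx2⟩ := hp
    have : p.1 1 * p.2 0 * p.2 2 = 0 := by simpa [form, hx0, hx2] using hform
    exact funext_fin_three hx0 (by simpa [hy 0, hy 2] using this) hx2
  calc _ ≤ #(Icc (-(N : ℤ)) N ×ˢ Icc (-(N : ℤ)) N) :=
        card_le_card_of_injOn (fun p => (p.2 1, p.2 2)) (fun p hp => ?_) fun p hp q hq hpq => ?_
    _ = (2 * N + 1) ^ 2 := by rw [card_product, Int.card_Icc_neg_natCast, sq]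
  · simp only [coe_filter, mem_solutions] at hp
    simp only [coe_product, coe_Icc, Set.mem_prod, Set.mem_Icc]
    have := hp.1.2.1 1
    have := hp.1.2.1 2
    omega
  · simp only [Prod.mk.injEq] at hpq
    have hpq₀ : p.2 0 = q.2 0 := (mem_filter.1 hp).2.1.trans (mem_filter.1 hq).2.1.symm
    exact Prod.ext ((hx p hp).trans (hx q hq).symm) (funext_fin_three hpq₀ hpq.1 hpq.2)

theorem card_slice_of_x0_eq_zero_of_x2_ne_zero (N : ℕ) (a : ℤ) :
    #{p ∈ solutions N | p.2 0 = a ∧ p.1 0 = 0 ∧ p.1 2 ≠ 0} ≤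
      maxCardDivisorsAntidiag (N ^ 2) * (2 * N + 1) ^ 2 := by
  rw [sq (2 * N + 1), ← Int.card_Icc_neg_natCast, ← card_product]
  refine card_le_maxCardDivisorsAntidiag_mul_card (f := fun p => (p.1 2, p.2 1))
    (fun p hp => ?_) (fun p => (p.1 1, p.2 2)) (fun p hp q hq hf hg => ?_) (fun b => -(b.1 * b.2))
    (fun p hp => ?_) fun p hp => ?_
  all_goals simp only [mem_filter, mem_solutions] at hp
  · have := hp.1.1 2
    have := hp.1.2.1 1
    simp only [mem_product, mem_Icc]
    omega
  · simp only [mem_filter, mem_solutions] at hq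
    simp only [Prod.mk.injEq] at hf hg
    exact Prod.ext (funext_fin_three (hp.2.2.1.trans hq.2.2.1.symm) hg.1 hf.1)
      (funext_fin_three (hp.2.1.trans hq.2.1.symm) hf.2 hg.2)
  · obtain ⟨⟨-, -, hform, hy⟩, -, hx0, hx2⟩ := hp
    have hsum : p.2 0 * (p.1 1 * p.2 2 + p.1 2 * p.2 1) = 0 := by
      unfold form at hform
      linear_combination hform - p.2 1 * p.2 2 * hx0
    refine Int.mem_divisorsAntidiag.2 ⟨?_, neg_ne_zero.2 (mul_ne_zero hx2 (hy 1))⟩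
    linear_combination (mul_eq_zero.1 hsum).resolve_left (hy 0)
  · rw [Int.natAbs_neg]
    exact Int.natAbs_mul_le_sq (hp.1.1 2) (hp.1.2.1 1)

theorem card_slice_of_x0_ne_zero_of_x1_eq_zero (N : ℕ) (a : ℤ) :
    #{p ∈ solutions N | p.2 0 = a ∧ p.1 0 ≠ 0 ∧ p.1 1 = 0} ≤
      maxCardDivisorsAntidiag (N ^ 2) * (2 * N + 1) ^ 2 := by
  rw [sq (2 * N + 1), ← Int.card_Icc_neg_natCast, ← card_product]
  refine card_le_maxCardDivisorsAntidiag_mul_card (f := fun p => (p.1 2, p.2 1))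
    (fun p hp => ?_) (fun p => (p.1 0, p.2 2)) (fun p hp q hq hf hg => ?_) (fun b => -(a * b.1))
    (fun p hp => ?_) fun p hp => ?_
  all_goals simp only [mem_filter, mem_solutions] at hp
  · have := hp.1.1 2
    have := hp.1.2.1 1
    simp only [mem_product, mem_Icc]
    omega
  · simp only [mem_filter, mem_solutions] at hq
    simp only [Prod.mk.injEq] at hf hg
    exact Prod.ext (funext_fin_three hg.1 (hp.2.2.2.trans hq.2.2.2.symm) hf.1)
      (funext_fin_three (hp.2.1.trans hq.2.1.symm) hf.2 hg.2)
  · obtain ⟨⟨-, -, hform, hy⟩, rfl, hx0, hx1⟩ := hp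
    have hsum : p.2 1 * (p.1 0 * p.2 2 + p.2 0 * p.1 2) = 0 := by
      unfold form at hform
      linear_combination hform - p.2 0 * p.2 2 * hx1
    have hprod : p.1 0 * p.2 2 = -(p.2 0 * p.1 2) := by
      linear_combination (mul_eq_zero.1 hsum).resolve_left (hy 1)
    exact Int.mem_divisorsAntidiag.2 ⟨hprod, hprod ▸ mul_ne_zero hx0 (hy 2)⟩
  · rw [Int.natAbs_neg, ← hp.2.1]
    exact Int.natAbs_mul_le_sq (hp.1.2.1 0) (hp.1.1 2)

theorem card_slice_of_x0_ne_zero_of_x2_eq_zero (N : ℕ) (a : ℤ) :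
    #{p ∈ solutions N | p.2 0 = a ∧ p.1 0 ≠ 0 ∧ p.1 2 = 0} ≤
      maxCardDivisorsAntidiag (N ^ 2) * (2 * N + 1) ^ 2 :=
  calc _ = #{p ∈ solutions N | (p.2 ∘ Equiv.swap 1 2) 0 = a ∧ (p.1 ∘ Equiv.swap 1 2) 0 ≠ 0 ∧
          (p.1 ∘ Equiv.swap 1 2) 1 = 0} := rfl
    _ = #{p ∈ solutions N | p.2 0 = a ∧ p.1 0 ≠ 0 ∧ p.1 1 = 0} :=
        card_filter_solutions_comp_swap N 1 2 fun p => p.2 0 = a ∧ p.1 0 ≠ 0 ∧ p.1 1 = 0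
    _ ≤ _ := card_slice_of_x0_ne_zero_of_x1_eq_zero N a

def factorData (p : (Fin 3 → ℤ) × (Fin 3 → ℤ)) : ℤ × ℤ × ℤ × ℤ :=
  (p.1 1, p.1 2, p.1 0 * p.2 1 + p.2 0 * p.1 1, p.1 0 * p.2 2 + p.2 0 * p.1 2)

theorem shifted_mul_shifted_eq (x y : Fin 3 → ℤ) :
    (x 0 * y 1 + y 0 * x 1) * (x 0 * y 2 + y 0 * x 2) = y 0 ^ 2 * (x 1 * x 2) + x 0 * form x y := by
  unfold form
  ring

theorem card_image_factorData_le (N : ℕ) (a : ℤ) :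
    #({p ∈ solutions N | p.2 0 = a ∧ p.1 0 ≠ 0 ∧ p.1 1 ≠ 0 ∧ p.1 2 ≠ 0}.image factorData) ≤
      maxCardDivisorsAntidiag (N ^ 4) * (2 * N + 1) ^ 2 := by
  rw [sq (2 * N + 1), ← Int.card_Icc_neg_natCast, ← card_product]
  refine card_le_maxCardDivisorsAntidiag_mul_card (f := fun b => (b.1, b.2.1)) ?_
    (fun b => b.2.2) (fun b _ c _ hf hg => Prod.ext (Prod.ext_iff.1 hf).1
      (Prod.ext (Prod.ext_iff.1 hf).2 hg)) (fun b => a ^ 2 * (b.1 * b.2)) ?_ ?_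
  all_goals refine forall_mem_image.2 fun p hp => ?_
  all_goals simp only [mem_filter, mem_solutions] at hp
  all_goals obtain ⟨⟨hx, hy, hform, hy0⟩, rfl, -, hx1, hx2⟩ := hp
  · simp only [factorData, mem_product, mem_Icc]
    have := hx 1
    have := hx 2
    omega
  · refine Int.mem_divisorsAntidiag.2
      ⟨?_, mul_ne_zero (pow_ne_zero 2 (hy0 0)) (mul_ne_zero hx1 hx2)⟩
    simp only [factorData, shifted_mul_shifted_eq, hform, mul_zero, add_zero]
  · show (p.2 0 ^ 2 * (p.1 1 * p.1 2)).natAbs ≤ N ^ 4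
    rw [Int.natAbs_mul, Int.natAbs_pow, show N ^ 4 = N ^ 2 * N ^ 2 by ring]
    exact Nat.mul_le_mul (Nat.pow_le_pow_left (hy 0) 2) (Int.natAbs_mul_le_sq (hx 1) (hx 2))

theorem card_slice_of_x_ne_zero (N : ℕ) (a : ℤ) :
    #{p ∈ solutions N | p.2 0 = a ∧ p.1 0 ≠ 0 ∧ p.1 1 ≠ 0 ∧ p.1 2 ≠ 0} ≤
      maxCardDivisorsAntidiag (N ^ 2) * (maxCardDivisorsAntidiag (N ^ 4) * (2 * N + 1) ^ 2) := by
  refine (card_le_maxCardDivisorsAntidiag_mul_card (fun p hp => mem_image_of_mem factorData hp)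
    (fun p => (p.1 0, p.2 1)) (fun p hp q hq hf hg => ?_) (fun b => b.2.2.1 - a * b.1)
    (fun p hp => ?_) fun p hp => ?_).trans (Nat.mul_le_mul_left _ (card_image_factorData_le N a))
  all_goals simp only [mem_filter, mem_solutions] at hp
  · simp only [mem_filter, mem_solutions] at hq
    simp only [factorData, Prod.mk.injEq] at hf hg
    obtain ⟨h1, h2, -, h4⟩ := hf
    have hy2 : p.2 2 = q.2 2 := mul_left_cancel₀ hp.2.2.1
      (by linear_combination h4 - p.2 0 * h2 - q.2 2 * hg.1 - q.1 2 * (hp.2.1.trans hq.2.1.symm))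
    exact Prod.ext (funext_fin_three hg.1 h1 h2)
      (funext_fin_three (hp.2.1.trans hq.2.1.symm) hg.2 hy2)
  · obtain ⟨⟨-, -, -, hy⟩, rfl, hx0, -⟩ := hp
    exact Int.mem_divisorsAntidiag.2
      ⟨by simp [factorData], by simpa [factorData] using mul_ne_zero hx0 (hy 1)⟩
  · obtain ⟨⟨hx, hy, -⟩, rfl, -⟩ := hp
    simpa [factorData] using Int.natAbs_mul_le_sq (hx 0) (hy 1)

theorem card_slice_le (N : ℕ) (hN : 1 ≤ N) (a : ℤ) :
    #{p ∈ solutions N | p.2 0 = a} ≤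
      5 * maxCardDivisorsAntidiag (N ^ 4) ^ 2 * (2 * N + 1) ^ 2 := by
  set A₁ := {p ∈ solutions N | p.2 0 = a ∧ p.1 0 = 0 ∧ p.1 2 = 0}
  set A₂ := {p ∈ solutions N | p.2 0 = a ∧ p.1 0 = 0 ∧ p.1 2 ≠ 0}
  set B₁ := {p ∈ solutions N | p.2 0 = a ∧ p.1 0 ≠ 0 ∧ p.1 1 = 0}
  set B₂ := {p ∈ solutions N | p.2 0 = a ∧ p.1 0 ≠ 0 ∧ p.1 2 = 0}
  set D := {p ∈ solutions N | p.2 0 = a ∧ p.1 0 ≠ 0 ∧ p.1 1 ≠ 0 ∧ p.1 2 ≠ 0}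
  have hcover : {p ∈ solutions N | p.2 0 = a} ⊆ A₁ ∪ A₂ ∪ B₁ ∪ B₂ ∪ D := by
    intro p hp
    obtain ⟨hp, ha⟩ := mem_filter.1 hp
    simp only [A₁, A₂, B₁, B₂, D, mem_union, mem_filter, hp, ha, true_and]
    by_cases h0 : p.1 0 = 0 <;> by_cases h1 : p.1 1 = 0 <;> by_cases h2 : p.1 2 = 0 <;>
      simp [h0, h1, h2]
  have hM : maxCardDivisorsAntidiag (N ^ 2) ≤ maxCardDivisorsAntidiag (N ^ 4) :=
    maxCardDivisorsAntidiag_mono (Nat.pow_le_pow_right hN (by norm_num))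
  have hM₁ : 1 ≤ maxCardDivisorsAntidiag (N ^ 4) :=
    one_le_maxCardDivisorsAntidiag (Nat.one_le_pow _ _ hN)
  calc _ ≤ #(A₁ ∪ A₂ ∪ B₁ ∪ B₂ ∪ D) := card_le_card hcover
    _ ≤ #A₁ + #A₂ + #B₁ + #B₂ + #D := by
        grw [card_union_le, card_union_le, card_union_le, card_union_le]
    _ ≤ (2 * N + 1) ^ 2 + maxCardDivisorsAntidiag (N ^ 2) * (2 * N + 1) ^ 2 +
          maxCardDivisorsAntidiag (N ^ 2) * (2 * N + 1) ^ 2 +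
          maxCardDivisorsAntidiag (N ^ 2) * (2 * N + 1) ^ 2 +
          maxCardDivisorsAntidiag (N ^ 2) * (maxCardDivisorsAntidiag (N ^ 4) * (2 * N + 1) ^ 2) :=
        add_le_add (add_le_add (add_le_add (add_le_add
          (card_slice_of_x0_eq_zero_of_x2_eq_zero N a)
          (card_slice_of_x0_eq_zero_of_x2_ne_zero N a))
          (card_slice_of_x0_ne_zero_of_x1_eq_zero N a))
          (card_slice_of_x0_ne_zero_of_x2_eq_zero N a))
          (card_slice_of_x_ne_zero N a)
    _ ≤ _ := by
        generalize maxCardDivisorsAntidiag (N ^ 2) = M₂ at hM ⊢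
        generalize maxCardDivisorsAntidiag (N ^ 4) = M₄ at hM hM₁ ⊢
        generalize (2 * N + 1) ^ 2 = k
        have h₁ : k ≤ M₄ ^ 2 * k := Nat.le_mul_of_pos_left k (by positivity)
        have h₂ : M₂ * k ≤ M₄ ^ 2 * k :=
          Nat.mul_le_mul_right k (hM.trans (Nat.le_self_pow two_ne_zero _))
        have h₃ : M₂ * (M₄ * k) ≤ M₄ ^ 2 * k := by
          rw [sq, mul_assoc]
          exact Nat.mul_le_mul_right _ hM
        linarith

theorem card_filter_natAbs_mem_le (N : ℕ) (hN : 1 ≤ N) (Z : Finset ℕ) (j : Fin 3) :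
    #{p ∈ solutions N | (p.2 j).natAbs ∈ Z} ≤
      2 * (5 * maxCardDivisorsAntidiag (N ^ 4) ^ 2 * (2 * N + 1) ^ 2) * #Z := by
  calc #{p ∈ solutions N | (p.2 j).natAbs ∈ Z}
      = #{p ∈ solutions N | ((p.2 ∘ Equiv.swap 0 j) 0).natAbs ∈ Z} := by simp
    _ = #{p ∈ solutions N | (p.2 0).natAbs ∈ Z} :=
        card_filter_solutions_comp_swap N 0 j fun p => (p.2 0).natAbs ∈ Z
    _ ≤ _ := by
        refine card_le_mul_card_image_of_maps_to
          (f := fun p : (Fin 3 → ℤ) × (Fin 3 → ℤ) => (p.2 0).natAbs)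
          (fun p hp => (mem_filter.1 hp).2) _ fun z _ => ?_
        calc _ ≤ #({p ∈ solutions N | p.2 0 = (z : ℤ)} ∪ {p ∈ solutions N | p.2 0 = -(z : ℤ)}) := by
              refine card_le_card fun p hp => ?_
              simp only [mem_filter] at hp
              simpa [hp.1.1] using Int.natAbs_eq_iff.1 hp.2
          _ ≤ _ := (card_union_le _ _).trans <| by
              rw [two_mul]
              gcongr <;> exact card_slice_le N hN _

theorem card_filter_exists_natAbs_mem_le (N : ℕ) (hN : 1 ≤ N) (Z : Finset ℕ) :
    #{p ∈ solutions N | ∃ j, (p.2 j).natAbs ∈ Z} ≤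
      30 * maxCardDivisorsAntidiag (N ^ 4) ^ 2 * (2 * N + 1) ^ 2 * #Z :=
  calc _ ≤ #(univ.biUnion fun j => {p ∈ solutions N | (p.2 j).natAbs ∈ Z}) :=
        card_le_card fun p hp => by simpa using hp
    _ ≤ #(univ : Finset (Fin 3)) * (2 * (5 * maxCardDivisorsAntidiag (N ^ 4) ^ 2 *
          (2 * N + 1) ^ 2) * #Z) :=
        card_biUnion_le_card_mul _ _ _ fun j _ => card_filter_natAbs_mem_le N hN Z j
    _ = _ := by simp only [card_univ, Fintype.card_fin]; ring

theorem setOf_eq_filter_solutions {P : ℝ} (hP : 0 ≤ P) (Z : Finset ℕ) :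
    {p : (Fin 3 → ℤ) × (Fin 3 → ℤ) |
        p.1 0 * p.2 1 * p.2 2 + p.1 1 * p.2 0 * p.2 2 + p.1 2 * p.2 0 * p.2 1 = 0 ∧
        p.2 0 * p.2 1 * p.2 2 ≠ 0 ∧
        (∀ j, (|p.1 j| : ℝ) ≤ P ∧ (|p.2 j| : ℝ) ≤ P) ∧
        (∃ j, (p.2 j).natAbs ∈ Z)} =
      ↑{p ∈ solutions ⌊P⌋₊ | ∃ j, (p.2 j).natAbs ∈ Z} := by
  have habs (x : ℤ) : |(x : ℝ)| ≤ P ↔ x.natAbs ≤ ⌊P⌋₊ := by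
    rw [Nat.le_floor_iff hP, Nat.cast_natAbs, Int.cast_abs]
  have hy (y : Fin 3 → ℤ) : y 0 * y 1 * y 2 ≠ 0 ↔ ∀ j, y j ≠ 0 := by
    simp [Fin.forall_fin_succ, Fin.succ_zero_eq_one, Fin.succ_one_eq_two, and_assoc]
  ext p
  simp only [Set.mem_ofPred_eq, coe_filter, mem_solutions, habs, hy, forall_and, form]
  tauto

end ThreeFractions

open ThreeFractions in
/-- Lemma 3: for `P ≥ 1` and `𝒵 ⊆ {1, …, ⌊P⌋}` of cardinality `Z`, the number of integer
solutions of the cubic with `y₁y₂y₃ ≠ 0`, `|x_j| ≤ P`, `|y_j| ≤ P` and `|y_j| ∈ 𝒵` for some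
`j` is `O_ε(P^{2+ε} Z)`. -/
theorem slim_set_count (ε : ℝ) (hε : 0 < ε) :
    ∃ C : ℝ, 0 < C ∧
      ∀ (P : ℝ), 1 ≤ P → ∀ (Z : Finset ℕ),
        (∀ z ∈ Z, 1 ≤ z ∧ (z : ℝ) ≤ P) →
        (Set.ncard {p : (Fin 3 → ℤ) × (Fin 3 → ℤ) |
            p.1 0 * p.2 1 * p.2 2 + p.1 1 * p.2 0 * p.2 2 + p.1 2 * p.2 0 * p.2 1 = 0 ∧
            p.2 0 * p.2 1 * p.2 2 ≠ 0 ∧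
            (∀ j, (|p.1 j| : ℝ) ≤ P ∧ (|p.2 j| : ℝ) ≤ P) ∧
            (∃ j, (p.2 j).natAbs ∈ Z)} : ℝ)
          ≤ C * P ^ (2 + ε) * Z.card := by
  set K : ℝ := 2 * divisorBoundConstant (ε / 8)
  have hK : 0 < K := by have := one_le_divisorBoundConstant (by positivity : 0 < ε / 8); positivity
  refine ⟨270 * K ^ 2, by positivity, fun P hP Z _ => ?_⟩
  set N := ⌊P⌋₊
  have hN : 1 ≤ N := Nat.le_floor (by simpa using hP)
  have hNP : (N : ℝ) ≤ P := Nat.floor_le (by linarith)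
  have hM : (maxCardDivisorsAntidiag (N ^ 4) : ℝ) ≤ K * P ^ (ε / 2) :=
    calc _ ≤ K * ((N ^ 4 : ℕ) : ℝ) ^ (ε / 8) :=
          maxCardDivisorsAntidiag_le_mul_rpow (by positivity) _
      _ ≤ K * P ^ (ε / 2) := by
        rw [Nat.cast_pow, ← Real.rpow_natCast, ← Real.rpow_mul (by positivity),
          show ((4 : ℕ) : ℝ) * (ε / 8) = ε / 2 by push_cast; ring]
        gcongr
  rw [setOf_eq_filter_solutions (by linarith) Z, Set.ncard_coe_finset]
  calc (#{p ∈ solutions N | ∃ j, (p.2 j).natAbs ∈ Z} : ℝ)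
      ≤ 30 * maxCardDivisorsAntidiag (N ^ 4) ^ 2 * (2 * N + 1) ^ 2 * #Z := by
        exact_mod_cast card_filter_exists_natAbs_mem_le N hN Z
    _ ≤ 30 * (K * P ^ (ε / 2)) ^ 2 * (3 * P) ^ 2 * #Z := by
        gcongr
        linarith [(Nat.one_le_cast (α := ℝ)).2 hN]
    _ = 270 * K ^ 2 * P ^ (2 + ε) * #Z := by
        rw [Real.rpow_add (by linarith), Real.rpow_two, mul_pow, ← Real.rpow_natCast (P ^ (ε / 2)),
          ← Real.rpow_mul (by linarith)]
        ring_nf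
end

section
/- Let k₀⁻ be the characteristic function of {(x_1, x_2) ∈ [0,∞)² : x_1 ≤ 10, x_2 ≤ 10, |x_1 - x_2| ≤ 1}. Then for Re(s_1), Re(s_2) > 0, its Mellin transform satisfies k̂₀⁻(s_1, s_2) = 10^{s_1+s_2}/(s_1 s_2) - F(s_2, s_1)/s_1 - F(s_1, s_2)/s_2, where F(a, b) = ∫_0^9 (x+1)^{a-1} x^{b} dx. Consequently s_1 s_2 k̂₀⁻(s_1, s_2) extends holomorphically to Re(s_1) > -1, Re(s_2) > -1. -/
open MeasureTheory

/-- `F(a, b) = ∫₀⁹ (x+1)^{a-1} x^{b} dx`. -/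
noncomputable def Fint (a b : ℂ) : ℂ :=
  ∫ x in (0 : ℝ)..9, ((x : ℂ) + 1) ^ (a - 1) * (x : ℂ) ^ b

/-- The Mellin transform of the characteristic function of
`{0 ≤ x₁ ≤ 10, 0 ≤ x₂ ≤ 10, |x₁ - x₂| ≤ 1}`. -/
noncomputable def kminusMellin (s₁ s₂ : ℂ) : ℂ :=
  ∫ p : ℝ × ℝ,
    Set.indicator {p : ℝ × ℝ | 0 ≤ p.1 ∧ 0 ≤ p.2 ∧ p.1 ≤ 10 ∧ p.2 ≤ 10 ∧ |p.1 - p.2| ≤ 1}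
      (fun _ => (1 : ℂ)) p * (p.1 : ℂ) ^ (s₁ - 1) * (p.2 : ℂ) ^ (s₂ - 1)

/-!
Splitting the band `|x₁ - x₂| ≤ 1` off the square `[0,10]²` leaves two triangles, swapped into
each other by `(x₁, x₂) ↦ (x₂, x₁)`. The square contributes `10^{s₁}/s₁ · 10^{s₂}/s₂`, and
integrating out `x₂ ∈ [0, x₁ - 1)` over the lower triangle gives `F(s₁, s₂)/s₂`.

For the continuation, `s₁ s₂ k̂₀⁻` is `10^{s₁+s₂} - s₂ F(s₂, s₁) - s₁ F(s₁, s₂)`, so it suffices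
that `F` is jointly holomorphic on `Re b > -1`. Near `q`,
`F(q + w) = ∫₀⁹ g(x) exp(w₁ log(x+1) + w₂ log x) dx` with `g(x) = (x+1)^{q₁-1} x^{q₂}`; expanding
the exponential gives a power series in `w` that converges as long as
`g(x) exp(r (|log(x+1)| + |log x|))` is integrable, i.e. for `r < Re q₂ + 1`.
-/

open Set Complex
open scoped Nat NNReal ENNReal

lemma pow_div_factorial_le_inv_pow_mul_exp {c t : ℝ} (hc : 0 < c) (ht : 0 ≤ t) (n : ℕ) :
    t ^ n / n ! ≤ c⁻¹ ^ n * Real.exp (c * t) :=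
  calc t ^ n / n ! = c⁻¹ ^ n * ((c * t) ^ n / n !) := by
        rw [mul_pow, ← mul_div_assoc, ← mul_assoc, ← mul_pow, inv_mul_cancel₀ hc.ne', one_pow,
          one_mul]
    _ ≤ c⁻¹ ^ n * Real.exp (c * t) := by
        gcongr
        exact Real.pow_div_factorial_le_exp (c * t) (by positivity) n

section LaplaceSeries

variable {E : Type*} [NormedAddCommGroup E] [NormedSpace ℂ E]

noncomputable def powMultilinear (ℓ : StrongDual ℂ E) (n : ℕ) : E [×n]→L[ℂ] ℂ :=
  (ContinuousMultilinearMap.mkPiAlgebra ℂ (Fin n) ℂ).compContinuousLinearMap fun _ => ℓ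

lemma powMultilinear_apply_diag (ℓ : StrongDual ℂ E) (n : ℕ) (y : E) :
    powMultilinear ℓ n (fun _ => y) = ℓ y ^ n := by
  simp [powMultilinear]

lemma norm_powMultilinear_le (ℓ : StrongDual ℂ E) (n : ℕ) : ‖powMultilinear ℓ n‖ ≤ ‖ℓ‖ ^ n :=
  calc ‖powMultilinear ℓ n‖
      ≤ ‖ContinuousMultilinearMap.mkPiAlgebra ℂ (Fin n) ℂ‖ * ∏ _i : Fin n, ‖ℓ‖ :=
        ContinuousMultilinearMap.norm_compContinuousLinearMap_le _ _
    _ = ‖ℓ‖ ^ n := by simp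

lemma continuous_powMultilinear (n : ℕ) :
    Continuous fun ℓ : StrongDual ℂ E => powMultilinear ℓ n :=
  ((ContinuousMultilinearMap.compContinuousLinearMapContinuousMultilinear ℂ
    (fun _ : Fin n => E) (fun _ => ℂ) ℂ).cont.comp
      (continuous_pi fun _ => continuous_id)).clm_apply continuous_const

lemma norm_smul_powMultilinear_le {c : ℝ} (hc : 0 < c) (n : ℕ) (z : ℂ) (ℓ : StrongDual ℂ E) :
    ‖((n ! : ℂ)⁻¹ * z) • powMultilinear ℓ n‖ ≤ c⁻¹ ^ n * (‖z‖ * Real.exp (c * ‖ℓ‖)) :=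
  calc ‖((n ! : ℂ)⁻¹ * z) • powMultilinear ℓ n‖
      ≤ ‖z‖ * (‖ℓ‖ ^ n / n !) := by
        rw [norm_smul, norm_mul, norm_inv, Complex.norm_natCast, mul_comm _ ‖z‖, mul_assoc,
          div_eq_inv_mul]
        gcongr
        exact norm_powMultilinear_le _ _
    _ ≤ ‖z‖ * (c⁻¹ ^ n * Real.exp (c * ‖ℓ‖)) := by
        gcongr
        exact pow_div_factorial_le_inv_pow_mul_exp hc (norm_nonneg _) n
    _ = c⁻¹ ^ n * (‖z‖ * Real.exp (c * ‖ℓ‖)) := by ring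

variable {α : Type*} [MeasurableSpace α] {μ : Measure α} {g : α → ℂ} {ℓ : α → StrongDual ℂ E}
  {c : ℝ}

noncomputable def laplaceSeries (μ : Measure α) (g : α → ℂ) (ℓ : α → StrongDual ℂ E) :
    FormalMultilinearSeries ℂ E ℂ :=
  fun n => ∫ x, ((n ! : ℂ)⁻¹ * g x) • powMultilinear (ℓ x) n ∂μ

lemma integrable_smul_powMultilinear (hc : 0 < c) (hg : AEStronglyMeasurable g μ)
    (hℓ : AEStronglyMeasurable ℓ μ) (hint : Integrable (fun x => ‖g x‖ * Real.exp (c * ‖ℓ x‖)) μ)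
    (n : ℕ) : Integrable (fun x => ((n ! : ℂ)⁻¹ * g x) • powMultilinear (ℓ x) n) μ :=
  (hint.const_mul _).mono'
    ((aestronglyMeasurable_const.mul hg).smul
      ((continuous_powMultilinear n).comp_aestronglyMeasurable hℓ))
    (ae_of_all _ fun x => norm_smul_powMultilinear_le hc n (g x) (ℓ x))

lemma norm_laplaceSeries_le (hc : 0 < c) (hg : AEStronglyMeasurable g μ)
    (hℓ : AEStronglyMeasurable ℓ μ) (hint : Integrable (fun x => ‖g x‖ * Real.exp (c * ‖ℓ x‖)) μ)
    (n : ℕ) : ‖laplaceSeries μ g ℓ n‖ ≤ c⁻¹ ^ n * ∫ x, ‖g x‖ * Real.exp (c * ‖ℓ x‖) ∂μ := by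
  rw [← integral_const_mul]
  exact (norm_integral_le_integral_norm _).trans <| integral_mono
    (integrable_smul_powMultilinear hc hg hℓ hint n).norm (hint.const_mul _)
    fun x => norm_smul_powMultilinear_le hc n (g x) (ℓ x)

lemma hasSum_laplaceSeries (hc : 0 < c) (hg : AEStronglyMeasurable g μ)
    (hℓ : AEStronglyMeasurable ℓ μ) (hint : Integrable (fun x => ‖g x‖ * Real.exp (c * ‖ℓ x‖)) μ)
    {y : E} (hy : ‖y‖ < c) :
    HasSum (fun n => laplaceSeries μ g ℓ n fun _ => y) (∫ x, g x * cexp (ℓ x y) ∂μ) := by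
  set F : ℕ → α → ℂ := fun n x => (((n ! : ℂ)⁻¹ * g x) • powMultilinear (ℓ x) n) fun _ => y
  have hF_int : ∀ n, Integrable (F n) μ := fun n =>
    (ContinuousMultilinearMap.apply ℂ (fun _ : Fin n => E) ℂ fun _ => y).integrable_comp
      (integrable_smul_powMultilinear hc hg hℓ hint n)
  have hF_le : ∀ n x, ‖F n x‖ ≤ (‖y‖ / c) ^ n * (‖g x‖ * Real.exp (c * ‖ℓ x‖)) := fun n x =>
    calc ‖F n x‖ ≤ ‖((n ! : ℂ)⁻¹ * g x) • powMultilinear (ℓ x) n‖ * ∏ _i : Fin n, ‖y‖ :=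
          ContinuousMultilinearMap.le_opNorm _ _
      _ ≤ (c⁻¹ ^ n * (‖g x‖ * Real.exp (c * ‖ℓ x‖))) * ‖y‖ ^ n := by
          rw [Finset.prod_const, Finset.card_univ, Fintype.card_fin]
          gcongr
          exact norm_smul_powMultilinear_le hc n (g x) (ℓ x)
      _ = (‖y‖ / c) ^ n * (‖g x‖ * Real.exp (c * ‖ℓ x‖)) := by
          rw [div_pow, div_eq_mul_inv, inv_pow]; ring
  have hF_sum : Summable fun n => ∫ x, ‖F n x‖ ∂μ := by
    refine Summable.of_nonneg_of_le (fun n => integral_nonneg fun x => norm_nonneg _)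
      (fun n => ?_) ((summable_geometric_of_lt_one (by positivity)
        ((div_lt_one hc).2 hy)).mul_right (∫ x, ‖g x‖ * Real.exp (c * ‖ℓ x‖) ∂μ))
    rw [← integral_const_mul]
    exact integral_mono (hF_int n).norm (hint.const_mul _) (hF_le n)
  have hF_tsum : ∀ x, ∑' n, F n x = g x * cexp (ℓ x y) := by
    intro x
    rw [Complex.exp_eq_exp_ℂ,
      ← ((NormedSpace.expSeries_div_hasSum_exp (ℓ x y)).mul_left (g x)).tsum_eq]
    refine tsum_congr fun n => ?_
    simp only [F, smul_apply, powMultilinear_apply_diag, smul_eq_mul]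
    ring
  have hcoeff : ∀ n, laplaceSeries μ g ℓ n (fun _ => y) = ∫ x, F n x ∂μ := fun n =>
    ContinuousMultilinearMap.integral_apply (integrable_smul_powMultilinear hc hg hℓ hint n) _
  simp_rw [hcoeff, ← hF_tsum]
  exact hasSum_integral_of_summable_integral_norm hF_int hF_sum

theorem hasFPowerSeriesOnBall_integral_mul_cexp {r : ℝ≥0} (hr : 0 < r)
    (hg : AEStronglyMeasurable g μ) (hℓ : AEStronglyMeasurable ℓ μ)
    (hint : Integrable (fun x => ‖g x‖ * Real.exp (r * ‖ℓ x‖)) μ) :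
    HasFPowerSeriesOnBall (fun y => ∫ x, g x * cexp (ℓ x y) ∂μ) (laplaceSeries μ g ℓ) 0 r where
  r_le := by
    refine (laplaceSeries μ g ℓ).le_radius_of_bound (∫ x, ‖g x‖ * Real.exp (r * ‖ℓ x‖) ∂μ)
      fun n => ?_
    calc ‖laplaceSeries μ g ℓ n‖ * (r : ℝ) ^ n
        ≤ ((r : ℝ)⁻¹ ^ n * ∫ x, ‖g x‖ * Real.exp (r * ‖ℓ x‖) ∂μ) * (r : ℝ) ^ n := by
          gcongr
          exact norm_laplaceSeries_le hr hg hℓ hint n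
      _ = ∫ x, ‖g x‖ * Real.exp (r * ‖ℓ x‖) ∂μ := by
          rw [mul_comm, ← mul_assoc, ← mul_pow, mul_inv_cancel₀ (NNReal.coe_pos.2 hr).ne',
            one_pow, one_mul]
  r_pos := by exact_mod_cast hr
  hasSum hy := by
    rw [zero_add]
    exact hasSum_laplaceSeries hr hg hℓ hint (by simpa using hy)

end LaplaceSeries

lemma ofReal_cpow_eq_cpow_mul_cexp {x : ℝ} (hx : 0 < x) (a b : ℂ) :
    (x : ℂ) ^ a = (x : ℂ) ^ b * cexp ((a - b) * Real.log x) := by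
  rw [cpow_def_of_ne_zero (ofReal_ne_zero.2 hx.ne'), cpow_def_of_ne_zero (ofReal_ne_zero.2 hx.ne'),
    ← Complex.exp_add, ofReal_log hx.le]
  ring_nf

lemma exp_mul_abs_log_le_rpow_add_rpow_neg {x : ℝ} (hx : 0 < x) (r : ℝ) :
    Real.exp (r * |Real.log x|) ≤ x ^ r + x ^ (-r) := by
  rw [Real.rpow_def_of_pos hx, Real.rpow_def_of_pos hx]
  rcases abs_cases (Real.log x) with ⟨h, -⟩ | ⟨h, -⟩ <;> rw [h]
  · rw [mul_comm]
    linarith [Real.exp_pos (Real.log x * -r)]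
  · rw [mul_neg, mul_comm, ← mul_neg]
    linarith [Real.exp_pos (Real.log x * r)]

lemma integrableOn_add_one_rpow_mul_rpow (s : ℝ) {t : ℝ} (ht : -1 < t) {T : ℝ} (hT : 0 ≤ T) :
    IntegrableOn (fun x : ℝ => (x + 1) ^ s * x ^ t) (Ioc 0 T) :=
  IntegrableOn.continuousOn_mul_of_subset
    ((continuousOn_id.add continuousOn_const).rpow_const fun x hx =>
      Or.inl (by simp only [Pi.add_apply, id]; linarith [hx.1]))
    ((intervalIntegrable_iff_integrableOn_Ioc_of_le hT).1
      (intervalIntegral.intervalIntegrable_rpow' ht))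
    isCompact_Icc measurableSet_Ioc Ioc_subset_Icc_self

noncomputable def logPair (x : ℝ) : StrongDual ℂ (ℂ × ℂ) :=
  (Real.log (x + 1) : ℂ) • ContinuousLinearMap.fst ℂ ℂ ℂ +
    (Real.log x : ℂ) • ContinuousLinearMap.snd ℂ ℂ ℂ

lemma norm_logPair_le (x : ℝ) : ‖logPair x‖ ≤ |Real.log (x + 1)| + |Real.log x| := by
  refine (norm_add_le _ _).trans (add_le_add ?_ ?_) <;>
    rw [norm_smul, norm_real, Real.norm_eq_abs]
  · exact mul_le_of_le_one_right (abs_nonneg _) (ContinuousLinearMap.norm_fst_le ℂ ℂ ℂ)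
  · exact mul_le_of_le_one_right (abs_nonneg _) (ContinuousLinearMap.norm_snd_le ℂ ℂ ℂ)

lemma aestronglyMeasurable_logPair (μ : Measure ℝ) : AEStronglyMeasurable logPair μ :=
  ((measurable_ofReal.comp (Real.measurable_log.comp (measurable_id.add_const 1)))
    |>.aestronglyMeasurable.smul_const _).add
    ((measurable_ofReal.comp Real.measurable_log).aestronglyMeasurable.smul_const _)

lemma Fint_eq_integral_mul_cexp_logPair (q p : ℂ × ℂ) :
    Fint p.1 p.2 = ∫ x in Ioc (0 : ℝ) 9,
      ((x : ℂ) + 1) ^ (q.1 - 1) * (x : ℂ) ^ q.2 * cexp (logPair x (p - q)) := by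
  rw [Fint, intervalIntegral.integral_of_le (by norm_num)]
  refine setIntegral_congr_fun measurableSet_Ioc fun x hx => ?_
  have h₁ := ofReal_cpow_eq_cpow_mul_cexp (x := x + 1) (by linarith [hx.1]) (p.1 - 1) (q.1 - 1)
  have h₂ := ofReal_cpow_eq_cpow_mul_cexp hx.1 p.2 q.2
  push_cast at h₁
  simp only [logPair, add_apply, smul_apply, ContinuousLinearMap.coe_fst',
    ContinuousLinearMap.coe_snd', Prod.fst_sub, Prod.snd_sub, smul_eq_mul]
  rw [h₁, h₂, Complex.exp_add]
  ring_nf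

lemma integrableOn_norm_mul_exp_norm_logPair {a b : ℂ} {r : ℝ} (hr : 0 ≤ r)
    (hrb : r < b.re + 1) :
    IntegrableOn (fun x : ℝ => ‖((x : ℂ) + 1) ^ (a - 1) * (x : ℂ) ^ b‖ *
      Real.exp (r * ‖logPair x‖)) (Ioc 0 9) := by
  have hdom : IntegrableOn (fun x : ℝ => (x + 1) ^ (a.re - 1 + r) * x ^ (b.re + r) +
      (x + 1) ^ (a.re - 1 + r) * x ^ (b.re - r)) (Ioc 0 9) :=
    (integrableOn_add_one_rpow_mul_rpow _ (by linarith) (by norm_num)).add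
      (integrableOn_add_one_rpow_mul_rpow _ (by linarith) (by norm_num))
  refine hdom.mono' ?_ ((ae_restrict_iff' measurableSet_Ioc).2 (ae_of_all _ fun x hx => ?_))
  · refine ((Measurable.aestronglyMeasurable ?_).norm).mul
      (Real.continuous_exp.comp_aestronglyMeasurable
        ((aestronglyMeasurable_logPair _).norm.const_mul r))
    fun_prop
  have hx₁ : (0 : ℝ) < x + 1 := by linarith [hx.1]
  have hnorm : ‖((x : ℂ) + 1) ^ (a - 1) * (x : ℂ) ^ b‖ = (x + 1) ^ (a.re - 1) * x ^ b.re := by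
    rw [norm_mul, show (x : ℂ) + 1 = ((x + 1 : ℝ) : ℂ) by push_cast; rfl,
      norm_cpow_eq_rpow_re_of_pos hx₁, norm_cpow_eq_rpow_re_of_pos hx.1, sub_re, one_re]
  have hexp : Real.exp (r * ‖logPair x‖) ≤ (x + 1) ^ r * (x ^ r + x ^ (-r)) :=
    calc Real.exp (r * ‖logPair x‖)
        ≤ Real.exp (r * Real.log (x + 1)) * Real.exp (r * |Real.log x|) := by
          rw [← Real.exp_add, ← mul_add, ← abs_of_nonneg (Real.log_nonneg (by linarith [hx.1]))]
          gcongr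
          exact norm_logPair_le x
      _ ≤ (x + 1) ^ r * (x ^ r + x ^ (-r)) := by
          rw [Real.rpow_def_of_pos hx₁, mul_comm r]
          gcongr
          exact exp_mul_abs_log_le_rpow_add_rpow_neg hx.1 r
  rw [Real.norm_of_nonneg (by positivity), hnorm]
  calc (x + 1) ^ (a.re - 1) * x ^ b.re * Real.exp (r * ‖logPair x‖)
      ≤ (x + 1) ^ (a.re - 1) * x ^ b.re * ((x + 1) ^ r * (x ^ r + x ^ (-r))) := by
        gcongr
        exact mul_nonneg (Real.rpow_nonneg hx₁.le _) (Real.rpow_nonneg hx.1.le _)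
    _ = (x + 1) ^ (a.re - 1 + r) * x ^ (b.re + r) +
          (x + 1) ^ (a.re - 1 + r) * x ^ (b.re - r) := by
      rw [Real.rpow_add hx₁, Real.rpow_add hx.1, sub_eq_add_neg b.re, Real.rpow_add hx.1]
      ring

theorem analyticAt_Fint {q : ℂ × ℂ} (hq : -1 < q.2.re) :
    AnalyticAt ℂ (fun p : ℂ × ℂ => Fint p.1 p.2) q := by
  set r : ℝ≥0 := ⟨(q.2.re + 1) / 2, by linarith⟩
  have hr : 0 < r := show (0 : ℝ) < (q.2.re + 1) / 2 by linarith
  have hG := (hasFPowerSeriesOnBall_integral_mul_cexp hr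
    (Measurable.aestronglyMeasurable (by fun_prop)) (aestronglyMeasurable_logPair _)
    (integrableOn_norm_mul_exp_norm_logPair (a := q.1) r.2
      (show (q.2.re + 1) / 2 < q.2.re + 1 by linarith))).analyticAt
  rw [← sub_self q] at hG
  exact (hG.comp (f := fun p => p - q) (analyticAt_id.sub analyticAt_const)).congr
    (Filter.Eventually.of_forall fun p => (Fint_eq_integral_mul_cexp_logPair q p).symm)

lemma integral_cpow_sub_one {s : ℂ} (hs : 0 < s.re) (c : ℝ) :
    ∫ x in (0 : ℝ)..c, (x : ℂ) ^ (s - 1) = (c : ℂ) ^ s / s := by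
  have hs₀ : s ≠ 0 := fun h => by simp [h] at hs
  rw [integral_cpow (Or.inl (by simpa using hs)), sub_add_cancel, ofReal_zero, zero_cpow hs₀,
    sub_zero]

lemma intervalIntegrable_cpow_sub_one {s : ℂ} (hs : 0 < s.re) (c : ℝ) :
    IntervalIntegrable (fun x : ℝ => (x : ℂ) ^ (s - 1)) volume 0 c :=
  intervalIntegral.intervalIntegrable_cpow' (by simpa using hs)

lemma setIntegral_eq_integral_setIntegral_prodMk {α β E : Type*} [MeasurableSpace α]
    [MeasurableSpace β] {μ : Measure α} {ν : Measure β} [SFinite μ] [SFinite ν]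
    [NormedAddCommGroup E] [NormedSpace ℝ E] {s : Set (α × β)} (hs : MeasurableSet s)
    {f : α × β → E} (hf : IntegrableOn f s (μ.prod ν)) :
    ∫ p in s, f p ∂μ.prod ν = ∫ x, ∫ y in Prod.mk x ⁻¹' s, f (x, y) ∂ν ∂μ := by
  rw [← integral_indicator hs, integral_prod _ (hf.integrable_indicator hs)]
  congr 1 with x
  rw [← integral_indicator (measurable_prodMk_left hs)]
  rfl

namespace KMinus

noncomputable def mellinMonomial (s t : ℂ) (p : ℝ × ℝ) : ℂ :=
  (p.1 : ℂ) ^ (s - 1) * (p.2 : ℂ) ^ (t - 1)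

def square : Set (ℝ × ℝ) := Icc 0 10 ×ˢ Icc 0 10

def corner : Set (ℝ × ℝ) := square ∩ {p | 1 < p.1 - p.2}

lemma measurableSet_square : MeasurableSet square := measurableSet_Icc.prod measurableSet_Icc

lemma measurableSet_corner : MeasurableSet corner :=
  measurableSet_square.inter (measurableSet_lt measurable_const (by fun_prop))

lemma band_eq_square_sdiff :
    {p : ℝ × ℝ | 0 ≤ p.1 ∧ 0 ≤ p.2 ∧ p.1 ≤ 10 ∧ p.2 ≤ 10 ∧ |p.1 - p.2| ≤ 1} =
      square \ (corner ∪ Prod.swap ⁻¹' corner) := by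
  ext p
  simp only [square, corner, mem_ofPred_eq, mem_sdiff, mem_union, mem_inter_iff, mem_preimage,
    mem_prod, mem_Icc, Prod.fst_swap, Prod.snd_swap, abs_le]
  constructor
  · rintro ⟨h₁, h₂, h₃, h₄, h₅, h₆⟩
    exact ⟨⟨⟨h₁, h₃⟩, h₂, h₄⟩, by rintro (⟨-, h⟩ | ⟨-, h⟩) <;> linarith⟩
  · rintro ⟨⟨⟨h₁, h₃⟩, h₂, h₄⟩, h⟩
    refine ⟨h₁, h₂, h₃, h₄, ?_, ?_⟩ <;> by_contra! h' <;> refine h ?_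
    exacts [Or.inr ⟨⟨⟨h₂, h₄⟩, h₁, h₃⟩, by linarith⟩, Or.inl ⟨⟨⟨h₁, h₃⟩, h₂, h₄⟩, by linarith⟩]

lemma integrableOn_square_mellinMonomial {s t : ℂ} (hs : 0 < s.re) (ht : 0 < t.re) :
    IntegrableOn (mellinMonomial s t) square := by
  rw [IntegrableOn, square, Measure.volume_eq_prod, ← Measure.prod_restrict]
  exact Integrable.mul_prod
    ((integrableOn_Icc_iff_integrableOn_Ioc).2 (intervalIntegrable_cpow_sub_one hs 10).1)
    ((integrableOn_Icc_iff_integrableOn_Ioc).2 (intervalIntegrable_cpow_sub_one ht 10).1)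

lemma setIntegral_square_mellinMonomial {s t : ℂ} (hs : 0 < s.re) (ht : 0 < t.re) :
    ∫ p in square, mellinMonomial s t p = 10 ^ (s + t) / (s * t) := by
  simp_rw [square, Measure.volume_eq_prod, mellinMonomial]
  rw [setIntegral_prod_mul (fun x : ℝ => (x : ℂ) ^ (s - 1)) (fun y : ℝ => (y : ℂ) ^ (t - 1)),
    integral_Icc_eq_integral_Ioc, integral_Icc_eq_integral_Ioc,
    ← intervalIntegral.integral_of_le (by norm_num),
    ← intervalIntegral.integral_of_le (by norm_num), integral_cpow_sub_one hs,
    integral_cpow_sub_one ht, cpow_add _ _ (by norm_num)]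
  push_cast
  ring

lemma setIntegral_prodMk_corner_mellinMonomial {s t : ℂ} (ht : 0 < t.re) (x : ℝ) :
    ∫ y in Prod.mk x ⁻¹' corner, mellinMonomial s t (x, y) =
      (Ioc 1 10).indicator (fun x : ℝ => (x : ℂ) ^ (s - 1) * ((x - 1 : ℝ) : ℂ) ^ t / t) x := by
  by_cases hx : x ∈ Ioc 1 10
  · have hslice : Prod.mk x ⁻¹' corner = Ico 0 (x - 1) := by
      ext y
      simp only [corner, square, mem_preimage, mem_inter_iff, mem_prod, mem_Icc, mem_ofPred_eq,
        mem_Ico]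
      constructor
      · rintro ⟨⟨-, hy, -⟩, hxy⟩
        exact ⟨hy, by linarith⟩
      · rintro ⟨hy, hxy⟩
        exact ⟨⟨⟨by linarith [hx.1], hx.2⟩, hy, by linarith [hx.2]⟩, by linarith⟩
    rw [hslice, indicator_of_mem hx, integral_Ico_eq_integral_Ioc,
      ← intervalIntegral.integral_of_le (by linarith [hx.1])]
    simp only [mellinMonomial]
    rw [intervalIntegral.integral_const_mul, integral_cpow_sub_one ht, mul_div_assoc]
  · have hslice : Prod.mk x ⁻¹' corner = ∅ := by
      ext y
      simp only [corner, square, mem_preimage, mem_inter_iff, mem_prod, mem_Icc, mem_ofPred_eq,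
        mem_empty_iff_false, iff_false, not_and, not_lt]
      rintro ⟨⟨-, hx₁⟩, hy, -⟩
      by_contra! hxy
      exact hx ⟨by linarith, hx₁⟩
    rw [hslice, indicator_of_notMem hx, Measure.restrict_empty, integral_zero_measure]

lemma setIntegral_corner_mellinMonomial {s t : ℂ} (hs : 0 < s.re) (ht : 0 < t.re) :
    ∫ p in corner, mellinMonomial s t p = Fint s t / t := by
  rw [Measure.volume_eq_prod, setIntegral_eq_integral_setIntegral_prodMk measurableSet_corner
      ((integrableOn_square_mellinMonomial hs ht).mono_set inter_subset_left)]
  simp_rw [setIntegral_prodMk_corner_mellinMonomial ht]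
  rw [integral_indicator measurableSet_Ioc, ← intervalIntegral.integral_of_le (by norm_num),
    Fint, ← intervalIntegral.integral_div]
  have hshift := intervalIntegral.integral_comp_add_right
    (fun x : ℝ => (x : ℂ) ^ (s - 1) * ((x - 1 : ℝ) : ℂ) ^ t / t) (a := 0) (b := 9) 1
  simp only [zero_add, show (9 : ℝ) + 1 = 10 by norm_num, add_sub_cancel_right] at hshift
  rw [← hshift]
  push_cast
  rfl

lemma setIntegral_preimage_swap_corner_mellinMonomial (s t : ℂ) :
    ∫ p in Prod.swap ⁻¹' corner, mellinMonomial s t p = ∫ p in corner, mellinMonomial t s p := by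
  rw [Measure.volume_eq_prod]
  refine Eq.trans ?_ (Measure.measurePreserving_swap.setIntegral_preimage_emb
    MeasurableEquiv.prodComm.measurableEmbedding (mellinMonomial t s) corner)
  simp only [mellinMonomial, Prod.fst_swap, Prod.snd_swap, mul_comm]

end KMinus

open KMinus in
theorem kminusMellin_eq {s t : ℂ} (hs : 0 < s.re) (ht : 0 < t.re) :
    kminusMellin s t = 10 ^ (s + t) / (s * t) - Fint t s / s - Fint s t / t := by
  have hint := integrableOn_square_mellinMonomial hs ht
  have hswap : Prod.swap ⁻¹' corner ⊆ square := fun p hp => ⟨hp.1.2, hp.1.1⟩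
  have hdisj : Disjoint corner (Prod.swap ⁻¹' corner) :=
    disjoint_left.2 fun p h h' => by
      have h₁ : 1 < p.1 - p.2 := h.2
      have h₂ : 1 < p.2 - p.1 := h'.2
      linarith
  have hmeas := measurableSet_corner.preimage measurable_swap
  calc kminusMellin s t
      = ∫ p in square \ (corner ∪ Prod.swap ⁻¹' corner), mellinMonomial s t p := by
        rw [kminusMellin, band_eq_square_sdiff, ← integral_indicator
          (measurableSet_square.diff (measurableSet_corner.union hmeas))]
        congr with p
        by_cases hp : p ∈ square \ (corner ∪ Prod.swap ⁻¹' corner)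
        · simp [hp, mellinMonomial]
        · simp [hp]
    _ = (∫ p in square, mellinMonomial s t p) - ((∫ p in corner, mellinMonomial s t p) +
          ∫ p in Prod.swap ⁻¹' corner, mellinMonomial s t p) := by
        rw [setIntegral_sdiff (measurableSet_corner.union hmeas) hint
            (union_subset inter_subset_left hswap),
          setIntegral_union hdisj hmeas (hint.mono_set inter_subset_left) (hint.mono_set hswap)]
    _ = 10 ^ (s + t) / (s * t) - Fint t s / s - Fint s t / t := by
        rw [setIntegral_square_mellinMonomial hs ht,
          setIntegral_preimage_swap_corner_mellinMonomial,
          setIntegral_corner_mellinMonomial hs ht, setIntegral_corner_mellinMonomial ht hs]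
        ring

/-- For `Re s₁, Re s₂ > 0`:
`k̂₀⁻(s₁,s₂) = 10^{s₁+s₂}/(s₁s₂) - F(s₂,s₁)/s₁ - F(s₁,s₂)/s₂`, and consequently
`s₁s₂ k̂₀⁻(s₁,s₂)` extends holomorphically to `Re s₁ > -1`, `Re s₂ > -1`. -/
theorem kminus_mellin_formula :
    (∀ s₁ s₂ : ℂ, 0 < s₁.re → 0 < s₂.re →
      kminusMellin s₁ s₂ =
        (10 : ℂ) ^ (s₁ + s₂) / (s₁ * s₂) - Fint s₂ s₁ / s₁ - Fint s₁ s₂ / s₂) ∧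
    ∃ g : ℂ × ℂ → ℂ,
      AnalyticOnNhd ℂ g {p : ℂ × ℂ | -1 < p.1.re ∧ -1 < p.2.re} ∧
      ∀ s₁ s₂ : ℂ, 0 < s₁.re → 0 < s₂.re →
        g (s₁, s₂) = s₁ * s₂ * kminusMellin s₁ s₂ := by
  refine ⟨fun s₁ s₂ h₁ h₂ => kminusMellin_eq h₁ h₂,
    fun p => 10 ^ (p.1 + p.2) - p.2 * Fint p.2 p.1 - p.1 * Fint p.1 p.2, ?_, ?_⟩
  · rintro p ⟨hp₁, hp₂⟩
    have hF₂₁ : AnalyticAt ℂ (fun p : ℂ × ℂ => Fint p.2 p.1) p :=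
      (analyticAt_Fint (q := p.swap) hp₁).comp (f := Prod.swap)
        (analyticAt_snd.prod analyticAt_fst)
    exact ((analyticAt_const.cpow (analyticAt_fst.add analyticAt_snd)
      (ofReal_mem_slitPlane.2 (by norm_num : (0 : ℝ) < 10))).sub
      (analyticAt_snd.mul hF₂₁)).sub (analyticAt_fst.mul (analyticAt_Fint hp₂))
  · intro s₁ s₂ h₁ h₂
    have hs₁ : s₁ ≠ 0 := fun h => by simp [h] at h₁
    have hs₂ : s₂ ≠ 0 := fun h => by simp [h] at h₂
    rw [kminusMellin_eq h₁ h₂]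
    field_simp
end

section
/- Let m, n be positive integers, ν = 1/(8n), and let ℓ_1, ..., ℓ_m be real linear forms in n variables such that for every i ∈ {1,...,n} at least one ℓ_j has nonzero coefficient of x_i. Then the function x ↦ Π_{j=1}^{n} (1+|x_j|)^{ν-1} · Π_{j=1}^{m} (1+|ℓ_j(x)|)^{-1/3} is integrable over ℝⁿ. -/
/-!
Fix `x` and let `x i` be a coordinate of largest absolute value; pick a form `ℓ` in which `x i`
has a nonzero coefficient. Moving the surplus `ν` of every other coordinate onto `x i` bounds the
integrand by `(1 + |x i|)^(-41/48) (1 + |ℓ x|)^(-1/3) ∏_{k ≠ i} (1 + |x k|)^(-(1 + 1/(48n)))`,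
and Young's inequality with exponents `6/5` and `6` splits the first two factors into
`(1 + |x i|)^(-41/40) + (1 + |ℓ x|)^(-2)`. Both resulting terms are integrable: the first is a
product of integrable functions of one variable each, and the second becomes one after the linear
change of variables replacing `x i` by `ℓ x`, which is invertible because `ℓ` involves `x i`.
-/

open MeasureTheory
open scoped BigOperators

theorem integrable_one_add_abs_rpow_neg {r : ℝ} (hr : 1 < r) :
    Integrable fun t : ℝ => (1 + |t|) ^ (-r) := by
  simpa [Real.norm_eq_abs] using
    integrable_one_add_norm (E := ℝ) (μ := volume) (r := r) (by simpa using hr)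

theorem integrable_mul_prod_compl_one_add_abs_rpow_neg {ι : Type*} [Fintype ι] [DecidableEq ι]
    {g : ℝ → ℝ} (hg : Integrable g) (i : ι) {r : ℝ} (hr : 1 < r) :
    Integrable fun x : ι → ℝ => g (x i) * ∏ k ∈ {i}ᶜ, (1 + |x k|) ^ (-r) := by
  have hprod := Integrable.fintype_prod (μ := fun _ : ι => (volume : Measure ℝ))
    (f := fun k => if k = i then g else fun t => (1 + |t|) ^ (-r))
    fun k => by split_ifs; exacts [hg, integrable_one_add_abs_rpow_neg hr]
  rw [← volume_pi] at hprod
  refine hprod.congr (ae_of_all _ fun x => ?_)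
  simp only [Fintype.prod_eq_mul_prod_compl i, if_pos]
  congr 1
  exact Finset.prod_congr rfl fun k hk => by rw [if_neg (by simpa using hk)]

theorem Integrable.comp_update_sum_mul {ι : Type*} [Fintype ι] [DecidableEq ι]
    {g : (ι → ℝ) → ℝ} (hg : Integrable g) {c : ι → ℝ} {i : ι} (hi : c i ≠ 0) :
    Integrable fun x => g (Function.update x i (∑ k, c k * x k)) := by
  set L := Matrix.toLin' ((1 : Matrix ι ι ℝ).updateRow i c)
  have hL : ∀ x, L x = Function.update x i (∑ k, c k * x k) := by
    intro x; ext k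
    by_cases hk : k = i
    · subst hk; simp [L, Matrix.mulVec, dotProduct]
    · simp [L, hk, Matrix.mulVec, dotProduct, Matrix.one_apply]
  have hdet : LinearMap.det L = c i := by
    have := Matrix.det_updateRow_sum (1 : Matrix ι ι ℝ) i c
    simp only [Matrix.det_one, smul_eq_mul, mul_one] at this
    rw [LinearMap.det_toLin', ← this]
    congr
    ext k; simp [Matrix.one_apply]
  have hmap := Measure.map_linearMap_addHaar_eq_smul_addHaar (volume : Measure (ι → ℝ))
    (hdet ▸ hi)
  have hg' : Integrable g (Measure.map L volume) := by
    rw [hmap]; exact hg.smul_measure ENNReal.ofReal_ne_top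
  simpa [Function.comp_def, hL] using
    hg'.comp_aemeasurable L.continuous_of_finiteDimensional.aemeasurable

theorem Real.prod_rpow_le_rpow_mul_prod_compl_rpow {ι : Type*} [Fintype ι] [DecidableEq ι]
    {u : ι → ℝ} (hu : ∀ k, 0 < u k) {i : ι} (hi : ∀ k, u k ≤ u i) {d e : ℝ} (hde : d ≤ e) :
    ∏ k, u k ^ e ≤ u i ^ (Fintype.card ι * e - (Fintype.card ι - 1) * d) *
      ∏ k ∈ {i}ᶜ, u k ^ d := by
  have hcard : ((({i}ᶜ : Finset ι).card : ℕ) : ℝ) = Fintype.card ι - 1 := by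
    rw [Finset.card_compl, Finset.card_singleton,
      Nat.cast_sub (Fintype.card_pos_iff.mpr ⟨i⟩), Nat.cast_one]
  have hfactor : ∀ k, u k ^ e ≤ u k ^ d * u i ^ (e - d) := fun k => by
    rw [← add_sub_cancel d e, Real.rpow_add (hu k), add_sub_cancel_left]
    exact mul_le_mul_of_nonneg_left (Real.rpow_le_rpow (hu k).le (hi k) (by linarith))
      (Real.rpow_nonneg (hu k).le d)
  calc ∏ k, u k ^ e = u i ^ e * ∏ k ∈ {i}ᶜ, u k ^ e := Fintype.prod_eq_mul_prod_compl i _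
    _ ≤ u i ^ e * ∏ k ∈ {i}ᶜ, (u k ^ d * u i ^ (e - d)) :=
        mul_le_mul_of_nonneg_left
          (Finset.prod_le_prod (fun k _ => Real.rpow_nonneg (hu k).le e) fun k _ => hfactor k)
          (Real.rpow_nonneg (hu i).le e)
    _ = _ := by
        rw [Finset.prod_mul_distrib, Finset.prod_const, ← Real.rpow_natCast,
          ← Real.rpow_mul (hu i).le, hcard, ← mul_assoc, mul_right_comm,
          ← Real.rpow_add (hu i)]
        ring_nf

theorem Real.rpow_mul_rpow_le_rpow_add_rpow {a b α β p q : ℝ} (ha : 0 ≤ a) (hb : 0 ≤ b)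
    (hpq : p.HolderConjugate q) : a ^ α * b ^ β ≤ a ^ (α * p) + b ^ (β * q) := by
  have hyoung :=
    Real.young_inequality_of_nonneg (Real.rpow_nonneg ha α) (Real.rpow_nonneg hb β) hpq
  rw [← Real.rpow_mul ha, ← Real.rpow_mul hb] at hyoung
  exact hyoung.trans (add_le_add (div_le_self (Real.rpow_nonneg ha _) hpq.lt.le)
    (div_le_self (Real.rpow_nonneg hb _) hpq.symm.lt.le))

theorem Real.prod_rpow_le_rpow_of_one_le {ι : Type*} [Fintype ι] {A : ι → ℝ}
    (hA : ∀ j, 1 ≤ A j) {s : ℝ} (hs : s ≤ 0) (j : ι) : ∏ k, A k ^ s ≤ A j ^ s := by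
  classical
  rw [Fintype.prod_eq_mul_prod_compl j]
  exact mul_le_of_le_one_right (Real.rpow_nonneg (zero_le_one.trans (hA j)) _)
    (Finset.prod_le_one (fun k _ => Real.rpow_nonneg (zero_le_one.trans (hA k)) _)
      fun k _ => Real.rpow_le_one_of_one_le_of_nonpos (hA k) hs)

/-- `j i` is meant to be a form in which the variable `x i` occurs. -/
noncomputable def linearFormsMajorant {m n : ℕ} (a : Fin m → Fin n → ℝ) (j : Fin n → Fin m)
    (x : Fin n → ℝ) : ℝ :=
  ∑ i, ((1 + |x i|) ^ (-(41 / 40 : ℝ)) + (1 + |∑ k, a (j i) k * x k|) ^ (-2 : ℝ)) *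
    ∏ k ∈ {i}ᶜ, (1 + |x k|) ^ (-(1 + 1 / (48 * n : ℝ)))

theorem integrable_linearFormsMajorant {m n : ℕ} (a : Fin m → Fin n → ℝ) (j : Fin n → Fin m)
    (hj : ∀ i, a (j i) i ≠ 0) : Integrable (linearFormsMajorant a j) := by
  refine integrable_finsetSum _ fun i _ => ?_
  have hr : 1 < 1 + 1 / (48 * n : ℝ) := by
    have : (0 : ℝ) < n := by exact_mod_cast i.pos
    simpa using this
  simp_rw [add_mul]
  refine (integrable_mul_prod_compl_one_add_abs_rpow_neg
    (integrable_one_add_abs_rpow_neg (by norm_num)) i hr).add ?_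
  refine (Integrable.comp_update_sum_mul (integrable_mul_prod_compl_one_add_abs_rpow_neg
    (integrable_one_add_abs_rpow_neg one_lt_two) i hr) (hj i)).congr
    (ae_of_all _ fun x => ?_)
  simp only [Function.update_self]
  congr 1
  exact Finset.prod_congr rfl fun k hk => by rw [Function.update_of_ne (by simpa using hk)]

theorem le_linearFormsMajorant {m n : ℕ} (hn : 0 < n) (a : Fin m → Fin n → ℝ)
    (j : Fin n → Fin m) (x : Fin n → ℝ) :
    (∏ i, (1 + |x i|) ^ (1 / (8 * (n : ℝ)) - 1)) *
      ∏ j', (1 + |∑ i, a j' i * x i|) ^ (-(1 / 3) : ℝ) ≤ linearFormsMajorant a j x := by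
  have hn' : (0 : ℝ) < n := by exact_mod_cast hn
  have : Nonempty (Fin n) := ⟨⟨0, hn⟩⟩
  obtain ⟨i, hi⟩ := Finite.exists_max fun k => 1 + |x k|
  set W := ∏ k ∈ {i}ᶜ, (1 + |x k|) ^ (-(1 + 1 / (48 * n : ℝ)))
  set A := 1 + |∑ k, a (j i) k * x k|
  have hW : 0 ≤ W := Finset.prod_nonneg fun k _ => by positivity
  -- `-41/48` is `n (ν - 1) + (n - 1)(1 + 1/(48n)) = -41/48 - 1/(48n)`, rounded up.
  have hcoords : ∏ k, (1 + |x k|) ^ (1 / (8 * (n : ℝ)) - 1) ≤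
      (1 + |x i|) ^ (-(41 / 48 : ℝ)) * W := by
    refine (Real.prod_rpow_le_rpow_mul_prod_compl_rpow (fun k => by positivity) hi ?_).trans
      (mul_le_mul_of_nonneg_right (Real.rpow_le_rpow_of_exponent_le (by simp) ?_) hW)
    · have : 0 < 1 / (8 * (n : ℝ)) := by positivity
      have : 0 < 1 / (48 * (n : ℝ)) := by positivity
      linarith
    · rw [Fintype.card_fin]
      field_simp
      nlinarith
  have hforms : ∏ j', (1 + |∑ i, a j' i * x i|) ^ (-(1 / 3) : ℝ) ≤ A ^ (-(1 / 3) : ℝ) :=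
    Real.prod_rpow_le_rpow_of_one_le (fun j' => by simp) (by norm_num) (j i)
  have hyoung : (1 + |x i|) ^ (-(41 / 48 : ℝ)) * A ^ (-(1 / 3) : ℝ) ≤
      (1 + |x i|) ^ (-(41 / 40 : ℝ)) + A ^ (-2 : ℝ) := by
    have := Real.rpow_mul_rpow_le_rpow_add_rpow (α := -(41 / 48)) (β := -(1 / 3))
      (by positivity : 0 ≤ 1 + |x i|) (by positivity : 0 ≤ A)
      (show (6 / 5 : ℝ).HolderConjugate 6 from ⟨by norm_num, by norm_num, by norm_num⟩)
    norm_num at this ⊢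
    exact this
  calc _ ≤ ((1 + |x i|) ^ (-(41 / 48 : ℝ)) * W) * A ^ (-(1 / 3) : ℝ) :=
        mul_le_mul hcoords hforms (by positivity) (by positivity)
    _ = ((1 + |x i|) ^ (-(41 / 48 : ℝ)) * A ^ (-(1 / 3) : ℝ)) * W := by ring
    _ ≤ ((1 + |x i|) ^ (-(41 / 40 : ℝ)) + A ^ (-2 : ℝ)) * W :=
        mul_le_mul_of_nonneg_right hyoung hW
    _ ≤ linearFormsMajorant a j x :=
        Finset.single_le_sum (f := fun i => ((1 + |x i|) ^ (-(41 / 40 : ℝ)) +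
          (1 + |∑ k, a (j i) k * x k|) ^ (-2 : ℝ)) *
            ∏ k ∈ {i}ᶜ, (1 + |x k|) ^ (-(1 + 1 / (48 * n : ℝ))))
          (fun i _ => by positivity) (Finset.mem_univ i)

theorem linear_forms_integrable_general (m n : ℕ) (hn : 0 < n)
    (a : Fin m → Fin n → ℝ) (ha : ∀ i, ∃ j, a j i ≠ 0) :
    Integrable (fun x : Fin n → ℝ =>
      (∏ i, (1 + |x i|) ^ ((1 / (8 * (n : ℝ))) - 1)) *
      ∏ j, (1 + |∑ i, a j i * x i|) ^ (-(1 / 3) : ℝ)) := by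
  choose j hj using ha
  refine (integrable_linearFormsMajorant a j hj).mono' (by fun_prop) (ae_of_all _ fun x => ?_)
  rw [Real.norm_of_nonneg (by positivity)]
  exact le_linearFormsMajorant hn a j x

/-- Lemma 13: if each variable `x_i` appears with nonzero coefficient in at least one of the
linear forms `ℓ_j(x) = ∑ᵢ a j i * x i`, and `ν = 1/(8n)`, then
`x ↦ ∏ᵢ (1+|xᵢ|)^{ν-1} ∏ⱼ (1+|ℓⱼ(x)|)^{-1/3}` is integrable over `ℝⁿ`. -/
theorem linear_forms_integrable (m n : ℕ) (hm : 0 < m) (hn : 0 < n)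
    (a : Fin m → Fin n → ℝ) (ha : ∀ i, ∃ j, a j i ≠ 0) :
    Integrable (fun x : Fin n → ℝ =>
      (∏ i, (1 + |x i|) ^ ((1 / (8 * (n : ℝ))) - 1)) *
      ∏ j, (1 + |∑ i, a j i * x i|) ^ (-(1 / 3) : ℝ)) :=
  linear_forms_integrable_general m n hn a ha
end

section
/- Let (x_1,x_2,x_3,y_1,y_2,y_3) be an integer solution of x_1 y_2 y_3 + x_2 y_1 y_3 + x_3 y_1 y_2 = 0 with y_1 y_2 y_3 ≠ 0 and |x_j| ≤ P, |y_j| ≤ P for all j. Write y_1 = u u_2 u_3 w_1, y_2 = u u_1 u_3 w_2, y_3 = u u_1 u_2 w_3 and x_j = w_j v_j with v_1 = u_2 r_3 - u_3 r_2, v_2 = u_3 r_1 - u_1 r_3, v_3 = u_1 r_2 - u_2 r_1 as in the torsor parametrization, with 1 ≤ r_1 ≤ 2u_1. If moreover |w_1 u_2 u_3| ≤ 2 min(|w_2 u_1 u_3|, |w_3 u_1 u_2|), then |r_1 u_2 w_3| ≤ 2P, |r_1 u_3 w_2| ≤ 2P, |r_2 u_1 w_3| ≤ 3P, |r_3 u_1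 w_2| ≤ 3P, |r_2 u_3 w_1| ≤ 7P, and |r_3 u_2 w_1| ≤ 7P. -/
/-! Since `1 ≤ r₁ ≤ 2u₁`, the products `r₁u₂w₃`, `r₁u₃w₂` are at most twice `y₃`, `y₂`. As
`r₂u₁w₃ = x₃ + r₁u₂w₃` and `r₃u₁w₂ = -x₂ + r₁u₃w₂`, the triangle inequality then gives `3P`.
Cancelling `u₂` (resp. `u₃`) in the hypothesis on `|w₁u₂u₃|` gives `|w₁u₃| ≤ 2|w₃u₁|` and
`|w₁u₂| ≤ 2|w₂u₁|`, which turn these `3P` bounds into `6P ≤ 7P` bounds for `r₂u₃w₁` and `r₃u₂w₁`. -/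

section OrderedRing

variable {α : Type*} [CommRing α] [LinearOrder α] [IsStrictOrderedRing α]

theorem abs_mul_mul_le_two_mul_of_le_two_mul {u a b r : α} (w : α) (hu : 1 ≤ u) (hb : 0 ≤ b)
    (hr : 0 ≤ r) (hra : r ≤ 2 * a) : |r * b * w| ≤ 2 * (u * a * b * |w|) := by
  have ha : 0 ≤ a := by linarith
  have hbw : 0 ≤ b * |w| := mul_nonneg hb (abs_nonneg w)
  calc |r * b * w| = r * (b * |w|) := by
        rw [abs_mul, abs_mul, abs_of_nonneg hr, abs_of_nonneg hb, mul_assoc]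
    _ ≤ 2 * a * (b * |w|) := mul_le_mul_of_nonneg_right hra hbw
    _ ≤ 2 * (u * a) * (b * |w|) := by gcongr; exact le_mul_of_one_le_left ha hu
    _ = 2 * (u * a * b * |w|) := by ring

theorem abs_le_abs_mul_abs_add_abs_of_eq {a b c w : α} (h : a = c * w + b) :
    |a| ≤ |c| * |w| + |b| := by
  rw [h, ← abs_mul]
  exact abs_add_le _ _

theorem abs_mul_le_mul_abs_mul_of_abs_mul_le {a b c k : α} (r : α) (hc : c ≠ 0)
    (h : |a * c| ≤ k * |b * c|) : |r * a| ≤ k * |r * b| := by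
  rw [abs_mul, abs_mul, ← mul_assoc] at h
  rw [abs_mul, abs_mul, mul_left_comm]
  exact mul_le_mul_of_nonneg_left (le_of_mul_le_mul_right h (abs_pos.2 hc)) (abs_nonneg r)

end OrderedRing

theorem torsor_size_bounds_general
    (P : ℝ) (u u₁ u₂ u₃ : ℤ) (w₁ w₂ w₃ r₁ r₂ r₃ : ℤ)
    (hu : 0 < u) (hu₂ : 0 < u₂) (hu₃ : 0 < u₃)
    (hr₁ : 1 ≤ r₁) (hr₁' : r₁ ≤ 2 * u₁)
    (hy₂ : ((u * u₁ * u₃ * |w₂| : ℤ) : ℝ) ≤ P)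
    (hy₃ : ((u * u₁ * u₂ * |w₃| : ℤ) : ℝ) ≤ P)
    (hx₂ : ((|u₃ * r₁ - u₁ * r₃| * |w₂| : ℤ) : ℝ) ≤ P)
    (hx₃ : ((|u₁ * r₂ - u₂ * r₁| * |w₃| : ℤ) : ℝ) ≤ P)
    (hmin : |w₁ * u₂ * u₃| ≤ 2 * min |w₂ * u₁ * u₃| |w₃ * u₁ * u₂|) :
    ((|r₁ * u₂ * w₃| : ℤ) : ℝ) ≤ 2 * P ∧
    ((|r₁ * u₃ * w₂| : ℤ) : ℝ) ≤ 2 * P ∧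
    ((|r₂ * u₁ * w₃| : ℤ) : ℝ) ≤ 3 * P ∧
    ((|r₃ * u₁ * w₂| : ℤ) : ℝ) ≤ 3 * P ∧
    ((|r₂ * u₃ * w₁| : ℤ) : ℝ) ≤ 7 * P ∧
    ((|r₃ * u₂ * w₁| : ℤ) : ℝ) ≤ 7 * P := by
  have hP : 0 ≤ P := le_trans (by positivity) hx₃
  have hmin₂ : |w₁ * u₂ * u₃| ≤ 2 * |w₂ * u₁ * u₃| :=
    hmin.trans (by gcongr; exact min_le_left _ _)
  have hmin₃ : |w₁ * u₂ * u₃| ≤ 2 * |w₃ * u₁ * u₂| :=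
    hmin.trans (by gcongr; exact min_le_right _ _)
  have h₁ : |r₁ * u₂ * w₃| ≤ 2 * (u * u₁ * u₂ * |w₃|) :=
    abs_mul_mul_le_two_mul_of_le_two_mul w₃ hu hu₂.le (by omega) hr₁'
  have h₂ : |r₁ * u₃ * w₂| ≤ 2 * (u * u₁ * u₃ * |w₂|) :=
    abs_mul_mul_le_two_mul_of_le_two_mul w₂ hu hu₃.le (by omega) hr₁'
  have h₃ : |r₂ * u₁ * w₃| ≤ |u₁ * r₂ - u₂ * r₁| * |w₃| + |r₁ * u₂ * w₃| :=
    abs_le_abs_mul_abs_add_abs_of_eq (by ring)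
  have h₄ : |r₃ * u₁ * w₂| ≤ |u₃ * r₁ - u₁ * r₃| * |w₂| + |r₁ * u₃ * w₂| := by
    rw [abs_sub_comm]
    exact abs_le_abs_mul_abs_add_abs_of_eq (by ring)
  have h₅ : |r₂ * u₃ * w₁| ≤ 2 * |r₂ * u₁ * w₃| := by
    have h : |u₃ * w₁ * u₂| ≤ 2 * |u₁ * w₃ * u₂| := by convert hmin₃ using 2 <;> ring_nf
    simpa only [mul_assoc] using abs_mul_le_mul_abs_mul_of_abs_mul_le r₂ hu₂.ne' h
  have h₆ : |r₃ * u₂ * w₁| ≤ 2 * |r₃ * u₁ * w₂| := by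
    have h : |u₂ * w₁ * u₃| ≤ 2 * |u₁ * w₂ * u₃| := by convert hmin₂ using 2 <;> ring_nf
    simpa only [mul_assoc] using abs_mul_le_mul_abs_mul_of_abs_mul_le r₃ hu₃.ne' h
  rify at h₁ h₂ h₃ h₄ h₅ h₆
  push_cast at hy₂ hy₃ hx₂ hx₃ ⊢
  refine ⟨by linarith, by linarith, by linarith, by linarith, by linarith, by linarith⟩

/-- Lemma 2A: size bounds in the torsor parametrization. Assuming
`u u₁ u₂ |w₃| ≤ P`, `u u₂ u₃ |w₁| ≤ P`, `u u₁ u₃ |w₂| ≤ P`,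
`|u₂r₃ - u₃r₂||w₁| ≤ P`, `|u₃r₁ - u₁r₃||w₂| ≤ P`, `|u₁r₂ - u₂r₁||w₃| ≤ P`,
`1 ≤ r₁ ≤ 2u₁`, and `|w₁u₂u₃| ≤ 2·min(|w₂u₁u₃|, |w₃u₁u₂|)`, one has
`|r₁u₂w₃| ≤ 2P`, `|r₁u₃w₂| ≤ 2P`, `|r₂u₁w₃| ≤ 3P`, `|r₃u₁w₂| ≤ 3P`,
`|r₂u₃w₁| ≤ 7P`, `|r₃u₂w₁| ≤ 7P`. -/
theorem torsor_size_bounds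
    (P : ℝ) (u u₁ u₂ u₃ : ℤ) (w₁ w₂ w₃ r₁ r₂ r₃ : ℤ)
    (hu : 0 < u) (hu₁ : 0 < u₁) (hu₂ : 0 < u₂) (hu₃ : 0 < u₃)
    (hw₁ : w₁ ≠ 0) (hw₂ : w₂ ≠ 0) (hw₃ : w₃ ≠ 0)
    (hr₁ : 1 ≤ r₁) (hr₁' : r₁ ≤ 2 * u₁)
    (hy₁ : ((u * u₂ * u₃ * |w₁| : ℤ) : ℝ) ≤ P)
    (hy₂ : ((u * u₁ * u₃ * |w₂| : ℤ) : ℝ) ≤ P)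
    (hy₃ : ((u * u₁ * u₂ * |w₃| : ℤ) : ℝ) ≤ P)
    (hx₁ : ((|u₂ * r₃ - u₃ * r₂| * |w₁| : ℤ) : ℝ) ≤ P)
    (hx₂ : ((|u₃ * r₁ - u₁ * r₃| * |w₂| : ℤ) : ℝ) ≤ P)
    (hx₃ : ((|u₁ * r₂ - u₂ * r₁| * |w₃| : ℤ) : ℝ) ≤ P)
    (hmin : |w₁ * u₂ * u₃| ≤ 2 * min |w₂ * u₁ * u₃| |w₃ * u₁ * u₂|) :
    ((|r₁ * u₂ * w₃| : ℤ) : ℝ) ≤ 2 * P ∧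
    ((|r₁ * u₃ * w₂| : ℤ) : ℝ) ≤ 2 * P ∧
    ((|r₂ * u₁ * w₃| : ℤ) : ℝ) ≤ 3 * P ∧
    ((|r₃ * u₁ * w₂| : ℤ) : ℝ) ≤ 3 * P ∧
    ((|r₂ * u₃ * w₁| : ℤ) : ℝ) ≤ 7 * P ∧
    ((|r₃ * u₂ * w₁| : ℤ) : ℝ) ≤ 7 * P :=
  torsor_size_bounds_general P u u₁ u₂ u₃ w₁ w₂ w₃ r₁ r₂ r₃ hu hu₂ hu₃ hr₁ hr₁' hy₂ hy₃ hx₂ hx₃ hmin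
end
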